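/- arXiv:0710.0638 — 5 statements merged into one kernel-verified Lean document; each statement's English description precedes it below -/
import Mathlib

section
/- For every integer r and all 2-forms λ, α ∈ Λ²V*, the pushforward identity p₂!( m_r*(λ) ∧ m*(λ) ∧ p₁*(α) ) = (r−1)²·(∫_A αλ)·λ + r·(∫_A λ²)·α holds in Λ²V*. (This is the Lemma of Section 4 of the paper, computing the pushforward p_{2!}(m_r*λ · m*λ · p₁*α) on A×A.) -/
/-!
Model: `V4 = Fin 4 → ℝ` plays the role of `V*` (so `Λ•V* = ExteriorAlgebra ℝ V4`),
with basis `f 0, …, f 3` (the `fⱼ*`), point class `ωA = f₁*∧f₂*∧f₃*∧f₄*`.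
`Λ•(V₁* ⊕ V₂*) = ExteriorAlgebra ℝ (V4 × V4)`, with `pull₁, pull₂` the algebra maps
induced by the two inclusions, and `mPull r` the algebra map induced by `ξ ↦ (ξ, r·ξ)`
(pullback under `m_r : A×A → A`).  The pushforward `p₂!` and the integration
functional `∫_A` are taken to be any linear maps satisfying their defining properties.
-/

noncomputable section

open ExteriorAlgebra

abbrev V4 : Type := Fin 4 → ℝ

def f (i : Fin 4) : V4 := Pi.single i 1

/-- the point class `ω = f₁*∧f₂*∧f₃*∧f₄*` -/
def ωA : ExteriorAlgebra ℝ V4 :=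
  ι ℝ (f 0) * ι ℝ (f 1) * ι ℝ (f 2) * ι ℝ (f 3)

/-- pullback `p₁*` under the first projection -/
def pull₁ : ExteriorAlgebra ℝ V4 →ₐ[ℝ] ExteriorAlgebra ℝ (V4 × V4) :=
  ExteriorAlgebra.map (LinearMap.inl ℝ V4 V4)

/-- pullback `p₂*` under the second projection -/
def pull₂ : ExteriorAlgebra ℝ V4 →ₐ[ℝ] ExteriorAlgebra ℝ (V4 × V4) :=
  ExteriorAlgebra.map (LinearMap.inr ℝ V4 V4)

/-- pullback `m_r*` under `m_r : A×A → A, (a,b) ↦ a + r·b`, induced by `ξ ↦ (ξ, r·ξ)` -/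
def mPull (r : ℤ) : ExteriorAlgebra ℝ V4 →ₐ[ℝ] ExteriorAlgebra ℝ (V4 × V4) :=
  ExteriorAlgebra.map (LinearMap.inl ℝ V4 V4 + (r : ℝ) • LinearMap.inr ℝ V4 V4)

/-
Write `m_c^*(u∧v) = p₁^*(u∧v) + c·(mixed terms) + c²·p₂^*(u∧v)`. In
`m_c^*x ∧ m_d^*y ∧ p₁^*a` for 2-forms `x, y, a`, only the terms with exactly four `V₁*`-factors
survive `p₂!`: five such factors vanish because `dim V = 4`, and `p₂!` kills fewer. The pure terms
contribute `d²∫(xa)·y + c²∫(ya)·x`. The mixed terms contribute `cd·Q(x, y, a)`, and `Q` is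
identified from the case `c = d = 1`: there `m^*x ∧ m^*y = ∫(xy)·m^*ω` and
`p₂!(m^*ω ∧ p₁^*a) = a`, a coordinate check on `Λ²V*`. Hence
`p₂!(m_c^*x ∧ m_d^*y ∧ p₁^*a) = (d² - cd)∫(ax)·y + (c² - cd)∫(ay)·x + cd∫(xy)·a`.
This is trilinear, so it suffices to check it on decomposable forms. Setting `x = y = λ`,
`c = r` and `d = 1` gives the lemma.
-/

namespace ExteriorAlgebra

variable {R M : Type*} [CommRing R] [AddCommGroup M] [Module R M]

theorem ι_mul_ι_anticomm (x y : M) : ι R x * ι R y = -(ι R y * ι R x) :=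
  eq_neg_of_add_eq_zero_left (ι_add_mul_swap x y)

theorem ι_mul_ι_mul_anticomm (x y : M) (z : ExteriorAlgebra R M) :
    ι R x * (ι R y * z) = -(ι R y * (ι R x * z)) := by
  rw [← mul_assoc, ι_mul_ι_anticomm, neg_mul, mul_assoc]

theorem ι_mul_ι_mul_self (x : M) (z : ExteriorAlgebra R M) : ι R x * (ι R x * z) = 0 := by
  rw [← mul_assoc, ι_sq_zero, zero_mul]

theorem commute_ι_mul_ι_ι (a b c : M) : Commute (ι R a * ι R b) (ι R c) := by
  simp only [Commute, SemiconjBy, mul_assoc, ι_mul_ι_mul_anticomm c, ι_mul_ι_anticomm b c,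
    mul_neg]

theorem commute_ι_mul_ι (a b c d : M) : Commute (ι R a * ι R b) (ι R c * ι R d) :=
  (commute_ι_mul_ι_ι a b c).mul_right (commute_ι_mul_ι_ι a b d)

theorem ι_mul_mem_exteriorPower (a : M) {n : ℕ} {x : ExteriorAlgebra R M}
    (hx : x ∈ ⋀[R]^n M) : ι R a * x ∈ ⋀[R]^(n + 1) M := by
  rw [exteriorPower, pow_succ']
  exact Submodule.mul_mem_mul (LinearMap.mem_range_self _ a) hx

theorem mul_mem_exteriorPower {m n : ℕ} {x y : ExteriorAlgebra R M} (hx : x ∈ ⋀[R]^m M)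
    (hy : y ∈ ⋀[R]^n M) : x * y ∈ ⋀[R]^(m + n) M := by
  rw [exteriorPower, pow_add]
  exact Submodule.mul_mem_mul hx hy

theorem ι_mem_exteriorPower_one (a : M) : ι R a ∈ ⋀[R]^1 M := by
  rw [exteriorPower, pow_one]
  exact LinearMap.mem_range_self _ a

@[elab_as_elim]
theorem exteriorPower_two_induction {P : ExteriorAlgebra R M → Prop}
    (hι : ∀ u v, P (ι R u * ι R v)) (hadd : ∀ x y, P x → P y → P (x + y))
    {x : ExteriorAlgebra R M} (hx : x ∈ ⋀[R]^2 M) : P x := by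
  rw [exteriorPower, pow_two] at hx
  refine Submodule.mul_induction_on hx ?_ hadd
  rintro _ ⟨u, rfl⟩ _ ⟨v, rfl⟩
  exact hι u v

theorem eq_zero_of_mem_exteriorPower_of_card_lt {ι' : Type*} [Fintype ι']
    (b : Module.Basis ι' R M) {n : ℕ} (hn : Fintype.card ι' < n) {x : ExteriorAlgebra R M}
    (hx : x ∈ ⋀[R]^n M) : x = 0 := by
  have hzero : ιMulti R n (M := M) = 0 := by
    refine b.ext_alternating fun v hv => ?_
    have := Fintype.card_le_of_injective v hv
    rw [Fintype.card_fin] at this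
    omega
  have hbot : ⋀[R]^n M ≤ ⊥ := by
    rw [← ιMulti_span_fixedDegree, Submodule.span_le]
    rintro _ ⟨v, rfl⟩
    simp [hzero]
  exact (Submodule.mem_bot R).mp (hbot hx)

theorem eq_smul_ιMulti_of_mem_exteriorPower_top {n : ℕ} (b : Module.Basis (Fin n) R M)
    (φ : ExteriorAlgebra R M →ₗ[R] R) (hφ : φ (ιMulti R n b) = 1) {x : ExteriorAlgebra R M}
    (hx : x ∈ ⋀[R]^n M) : x = φ x • ιMulti R n b := by
  have key : ιMulti R n = (φ.smulRight (ιMulti R n b)).compAlternatingMap (ιMulti R n) := by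
    refine b.ext_alternating fun v hv => ?_
    let σ : Equiv.Perm (Fin n) := Equiv.ofBijective v (Finite.injective_iff_bijective.mp hv)
    change ιMulti R n (b ∘ σ)
      = (φ.smulRight (ιMulti R n b)).compAlternatingMap (ιMulti R n) (b ∘ σ)
    simp [AlternatingMap.map_perm, hφ]
  rw [← ιMulti_span_fixedDegree] at hx
  refine Submodule.span_induction ?_ ?_ ?_ ?_ hx
  · rintro _ ⟨v, rfl⟩
    exact congr($key v)
  · simp
  · intro x y _ _ hx hy
    rw [map_add, add_smul, ← hx, ← hy]
  · intro a x _ hx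
    rw [map_smul, smul_eq_mul, mul_smul, ← hx]

end ExteriorAlgebra

theorem AlgHom.map_mul_map_mul {R A B : Type*} [CommSemiring R] [Semiring A] [Semiring B]
    [Algebra R A] [Algebra R B] (φ : A →ₐ[R] B) (x y : A) (z : B) :
    φ x * (φ y * z) = φ (x * y) * z := by
  rw [← mul_assoc, map_mul]

theorem ωA_eq_ιMulti : ωA = ιMulti ℝ 4 (Pi.basisFun ℝ (Fin 4)) := by
  simp only [ιMulti_apply, List.ofFn_succ, List.ofFn_zero, List.prod_cons, List.prod_nil,
    mul_one, Pi.basisFun_apply, ωA, f, mul_assoc]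
  rfl

theorem wedge_five_eq_zero (a b c d e : V4) :
    ι ℝ a * (ι ℝ b * (ι ℝ c * (ι ℝ d * ι ℝ e))) = 0 :=
  eq_zero_of_mem_exteriorPower_of_card_lt (Pi.basisFun ℝ (Fin 4)) (by simp) <|
    ι_mul_mem_exteriorPower a <| ι_mul_mem_exteriorPower b <| ι_mul_mem_exteriorPower c <|
      ι_mul_mem_exteriorPower d <| ι_mem_exteriorPower_one e

section Integration

variable (integ : ExteriorAlgebra ℝ V4 →ₗ[ℝ] ℝ) (hintegω : integ ωA = 1)
include hintegω

theorem eq_integ_smul_ωA_of_mem_four {x : ExteriorAlgebra ℝ V4} (hx : x ∈ ⋀[ℝ]^4 V4) :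
    x = integ x • ωA := by
  rw [ωA_eq_ιMulti] at hintegω ⊢
  exact eq_smul_ιMulti_of_mem_exteriorPower_top _ integ hintegω hx

theorem integ_ωA_mul_assoc : integ (ι ℝ (f 0) * (ι ℝ (f 1) * (ι ℝ (f 2) * ι ℝ (f 3)))) = 1 := by
  rw [← hintegω, ωA, mul_assoc, mul_assoc]

-- The coefficient of `f k ∧ f l` in `s ∧ t` is read off by pairing with the complementary
-- basis 2-form `± f i ∧ f j`.
theorem ι_mul_ι_eq_sum_integ_smul (s t : V4) :
    ι ℝ s * ι ℝ t
      = integ (ι ℝ (f 0) * ι ℝ (f 1) * (ι ℝ s * ι ℝ t)) • (ι ℝ (f 2) * ι ℝ (f 3))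
      - integ (ι ℝ (f 0) * ι ℝ (f 2) * (ι ℝ s * ι ℝ t)) • (ι ℝ (f 1) * ι ℝ (f 3))
      + integ (ι ℝ (f 0) * ι ℝ (f 3) * (ι ℝ s * ι ℝ t)) • (ι ℝ (f 1) * ι ℝ (f 2))
      + integ (ι ℝ (f 1) * ι ℝ (f 2) * (ι ℝ s * ι ℝ t)) • (ι ℝ (f 0) * ι ℝ (f 3))
      - integ (ι ℝ (f 1) * ι ℝ (f 3) * (ι ℝ s * ι ℝ t)) • (ι ℝ (f 0) * ι ℝ (f 2))
      + integ (ι ℝ (f 2) * ι ℝ (f 3) * (ι ℝ s * ι ℝ t)) • (ι ℝ (f 0) * ι ℝ (f 1)) := by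
  let B := (LinearMap.mul ℝ (ExteriorAlgebra ℝ V4)).compl₁₂ (ι ℝ) (ι ℝ)
  let T (i j k l : Fin 4) := B.compr₂
    (integ.smulRight (ι ℝ (f k) * ι ℝ (f l)) ∘ₗ LinearMap.mulLeft ℝ (ι ℝ (f i) * ι ℝ (f j)))
  have hB : B = T 0 1 2 3 - T 0 2 1 3 + T 0 3 1 2 + T 1 2 0 3 - T 1 3 0 2 + T 2 3 0 1 := by
    refine LinearMap.ext_basis (Pi.basisFun ℝ (Fin 4)) (Pi.basisFun ℝ (Fin 4)) fun p q => ?_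
    have hf : ∀ i, Pi.basisFun ℝ (Fin 4) i = f i := fun i => Pi.basisFun_apply ℝ (Fin 4) i
    fin_cases p <;> fin_cases q <;>
      simp only [B, T, hf, LinearMap.add_apply, LinearMap.sub_apply, LinearMap.compr₂_apply,
        LinearMap.compl₁₂_apply, LinearMap.mul_apply', LinearMap.comp_apply,
        LinearMap.mulLeft_apply, LinearMap.smulRight_apply, Fin.isValue, Fin.zero_eta,
        Fin.mk_one, Fin.reduceFinMk, mul_assoc,
        ι_mul_ι_mul_anticomm (f 1) (f 0), ι_mul_ι_mul_anticomm (f 2) (f 0),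
        ι_mul_ι_mul_anticomm (f 3) (f 0), ι_mul_ι_mul_anticomm (f 2) (f 1),
        ι_mul_ι_mul_anticomm (f 3) (f 1), ι_mul_ι_mul_anticomm (f 3) (f 2),
        ι_mul_ι_anticomm (f 1) (f 0), ι_mul_ι_anticomm (f 2) (f 0),
        ι_mul_ι_anticomm (f 3) (f 0), ι_mul_ι_anticomm (f 2) (f 1),
        ι_mul_ι_anticomm (f 3) (f 1), ι_mul_ι_anticomm (f 3) (f 2),
        ι_mul_ι_mul_self, ι_sq_zero, mul_neg, neg_neg, mul_zero, map_neg, map_zero,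
        integ_ωA_mul_assoc integ hintegω, one_smul,
        add_zero, zero_add, sub_zero, zero_sub, neg_zero, sub_neg_eq_add]
  simpa [B, T, mul_assoc] using congr($hB s t)

end Integration

theorem mPull_ι (c : ℤ) (v : V4) : mPull c (ι ℝ v) = pull₁ (ι ℝ v) + (c : ℝ) • pull₂ (ι ℝ v) := by
  rw [mPull, map_apply_ι, LinearMap.add_apply, LinearMap.smul_apply, map_add, map_smul, pull₁,
    pull₂, map_apply_ι, map_apply_ι]

theorem pull₂_ι_mul_pull₁_ι (x y : V4) :
    pull₂ (ι ℝ x) * pull₁ (ι ℝ y) = -(pull₁ (ι ℝ y) * pull₂ (ι ℝ x)) := by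
  simp only [pull₁, pull₂, map_apply_ι]
  exact ι_mul_ι_anticomm _ _

theorem pull₂_ι_mul_pull₁_ι_mul (x y : V4) (z : ExteriorAlgebra ℝ (V4 × V4)) :
    pull₂ (ι ℝ x) * (pull₁ (ι ℝ y) * z) = -(pull₁ (ι ℝ y) * (pull₂ (ι ℝ x) * z)) := by
  rw [← mul_assoc, pull₂_ι_mul_pull₁_ι, neg_mul, mul_assoc]

section Pushforward

variable (integ : ExteriorAlgebra ℝ V4 →ₗ[ℝ] ℝ) (hintegω : integ ωA = 1)
  (push : ExteriorAlgebra ℝ (V4 × V4) →ₗ[ℝ] ExteriorAlgebra ℝ V4)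
  (hpushω : ∀ β : ExteriorAlgebra ℝ V4, push (pull₁ ωA * pull₂ β) = β)
  (hpushlow : ∀ k : ℕ, k < 4 → ∀ γ ∈ ⋀[ℝ]^k V4,
    ∀ β : ExteriorAlgebra ℝ V4, push (pull₁ γ * pull₂ β) = 0)

include hintegω hpushω in
theorem push_pull₁_wedge_four (a b c d : V4) (β : ExteriorAlgebra ℝ V4) :
    push (pull₁ (ι ℝ a * (ι ℝ b * (ι ℝ c * ι ℝ d))) * pull₂ β)
      = integ (ι ℝ a * (ι ℝ b * (ι ℝ c * ι ℝ d))) • β := by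
  conv_lhs => rw [eq_integ_smul_ωA_of_mem_four integ hintegω <| ι_mul_mem_exteriorPower a <|
    ι_mul_mem_exteriorPower b <| ι_mul_mem_exteriorPower c <| ι_mem_exteriorPower_one d]
  rw [map_smul, smul_mul_assoc, map_smul, hpushω]

include hpushlow in
theorem push_pull₁_wedge_three (a b c : V4) (β : ExteriorAlgebra ℝ V4) :
    push (pull₁ (ι ℝ a * (ι ℝ b * ι ℝ c)) * pull₂ β) = 0 :=
  hpushlow 3 (by norm_num) _ (ι_mul_mem_exteriorPower a <| ι_mul_mem_exteriorPower b <|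
    ι_mem_exteriorPower_one c) β

include hpushlow in
theorem push_pull₁_wedge_two (a b : V4) (β : ExteriorAlgebra ℝ V4) :
    push (pull₁ (ι ℝ a * ι ℝ b) * pull₂ β) = 0 :=
  hpushlow 2 (by norm_num) _ (ι_mul_mem_exteriorPower a <| ι_mem_exteriorPower_one b) β

include hintegω hpushω hpushlow in
theorem push_mPull_ι_mul_mPull_ι_mul_pull₁_ι_expanded (c d : ℤ) (u v w z s t : V4) :
    push (mPull c (ι ℝ u * ι ℝ v) * mPull d (ι ℝ w * ι ℝ z) * pull₁ (ι ℝ s * ι ℝ t))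
      = ((d : ℝ) ^ 2 * integ (ι ℝ u * ι ℝ v * (ι ℝ s * ι ℝ t))) • (ι ℝ w * ι ℝ z)
        + ((c : ℝ) ^ 2 * integ (ι ℝ w * ι ℝ z * (ι ℝ s * ι ℝ t))) • (ι ℝ u * ι ℝ v)
        + ((c : ℝ) * d) • (integ (ι ℝ u * ι ℝ z * (ι ℝ s * ι ℝ t)) • (ι ℝ v * ι ℝ w)
          + integ (ι ℝ v * ι ℝ w * (ι ℝ s * ι ℝ t)) • (ι ℝ u * ι ℝ z)
          - integ (ι ℝ u * ι ℝ w * (ι ℝ s * ι ℝ t)) • (ι ℝ v * ι ℝ z)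
          - integ (ι ℝ v * ι ℝ z * (ι ℝ s * ι ℝ t)) • (ι ℝ u * ι ℝ w)) := by
  simp only [map_mul, mPull_ι, add_mul, mul_add, smul_mul_assoc, mul_smul_comm, map_add,
    map_smul, mul_assoc]
  simp only [pull₂_ι_mul_pull₁_ι_mul, pull₂_ι_mul_pull₁_ι, mul_neg, neg_neg, map_neg, smul_neg]
  simp only [pull₁.map_mul_map_mul, ← map_mul]
  simp only [wedge_five_eq_zero, mul_zero, neg_zero, map_zero, zero_mul, smul_zero,
    push_pull₁_wedge_four integ hintegω push hpushω, push_pull₁_wedge_three push hpushlow,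
    push_pull₁_wedge_two push hpushlow, add_zero, zero_add, smul_smul]
  module

include hintegω hpushω hpushlow in
theorem push_mPull_one_ωA_mul_pull₁ (s t : V4) :
    push (mPull 1 ωA * pull₁ (ι ℝ s * ι ℝ t)) = ι ℝ s * ι ℝ t := by
  rw [ωA, mul_assoc _ (ι ℝ (f 2)), map_mul (mPull 1),
    push_mPull_ι_mul_mPull_ι_mul_pull₁_ι_expanded integ hintegω push hpushω hpushlow]
  conv_rhs => rw [ι_mul_ι_eq_sum_integ_smul integ hintegω s t]
  simp only [Int.cast_one]
  module

include hintegω hpushω hpushlow in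
theorem push_mPull_one_mul_pull₁_of_mem_four {γ : ExteriorAlgebra ℝ V4} (hγ : γ ∈ ⋀[ℝ]^4 V4)
    (s t : V4) : push (mPull 1 γ * pull₁ (ι ℝ s * ι ℝ t)) = integ γ • (ι ℝ s * ι ℝ t) := by
  rw [eq_integ_smul_ωA_of_mem_four integ hintegω hγ, map_smul, smul_mul_assoc, map_smul,
    push_mPull_one_ωA_mul_pull₁ integ hintegω push hpushω hpushlow, map_smul, hintegω, smul_eq_mul,
    mul_one]

include hintegω hpushω hpushlow in
theorem push_mPull_ι_mul_mPull_ι_mul_pull₁_ι (c d : ℤ) (u v w z s t : V4) :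
    push (mPull c (ι ℝ u * ι ℝ v) * mPull d (ι ℝ w * ι ℝ z) * pull₁ (ι ℝ s * ι ℝ t))
      = (((d : ℝ) ^ 2 - c * d) * integ (ι ℝ s * ι ℝ t * (ι ℝ u * ι ℝ v))) • (ι ℝ w * ι ℝ z)
        + (((c : ℝ) ^ 2 - c * d) * integ (ι ℝ s * ι ℝ t * (ι ℝ w * ι ℝ z))) • (ι ℝ u * ι ℝ v)
        + ((c : ℝ) * d * integ (ι ℝ u * ι ℝ v * (ι ℝ w * ι ℝ z))) • (ι ℝ s * ι ℝ t) := by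
  have hcd := push_mPull_ι_mul_mPull_ι_mul_pull₁_ι_expanded integ hintegω push hpushω hpushlow
    c d u v w z s t
  have h₁₁ := push_mPull_ι_mul_mPull_ι_mul_pull₁_ι_expanded integ hintegω push hpushω hpushlow
    1 1 u v w z s t
  have hω := push_mPull_one_mul_pull₁_of_mem_four integ hintegω push hpushω hpushlow
    (mul_mem_exteriorPower (ι_mul_mem_exteriorPower u (ι_mem_exteriorPower_one v))
      (ι_mul_mem_exteriorPower w (ι_mem_exteriorPower_one z))) s t
  rw [map_mul (mPull 1)] at hω
  rw [(commute_ι_mul_ι s t u v).eq, (commute_ι_mul_ι s t w z).eq]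
  simp only [Int.cast_one] at h₁₁
  linear_combination (norm := module) hcd + ((c : ℝ) * d) • (hω - h₁₁)

include hintegω hpushω hpushlow in
theorem push_mPull_mul_mPull_mul_pull₁ (c d : ℤ) {x y a : ExteriorAlgebra ℝ V4}
    (hx : x ∈ ⋀[ℝ]^2 V4) (hy : y ∈ ⋀[ℝ]^2 V4) (ha : a ∈ ⋀[ℝ]^2 V4) :
    push (mPull c x * mPull d y * pull₁ a)
      = (((d : ℝ) ^ 2 - c * d) * integ (a * x)) • y + (((c : ℝ) ^ 2 - c * d) * integ (a * y)) • x
        + ((c : ℝ) * d * integ (x * y)) • a := by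
  refine exteriorPower_two_induction (fun u v => ?_) (fun x₁ x₂ h₁ h₂ => ?_) hx
  · refine exteriorPower_two_induction (fun w z => ?_) (fun y₁ y₂ h₁ h₂ => ?_) hy
    · refine exteriorPower_two_induction (fun s t => ?_) (fun a₁ a₂ h₁ h₂ => ?_) ha
      · exact push_mPull_ι_mul_mPull_ι_mul_pull₁_ι integ hintegω push hpushω hpushlow
          c d u v w z s t
      · simp only [map_add, mul_add, add_mul, h₁, h₂]
        module
    · simp only [map_add, mul_add, add_mul, h₁, h₂]
      module
  · simp only [map_add, mul_add, add_mul, h₁, h₂]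
    module

end Pushforward

theorem stmt0_general (r : ℤ)
    -- `∫_A : Λ•V* → ℝ`, the coordinate with respect to `ω`:
    (integ : ExteriorAlgebra ℝ V4 →ₗ[ℝ] ℝ)
    (hintegω : integ ωA = 1)
    -- `p₂! : Λ•(V₁*⊕V₂*) → Λ•V*`, integration over the first factor:
    (push : ExteriorAlgebra ℝ (V4 × V4) →ₗ[ℝ] ExteriorAlgebra ℝ V4)
    (hpushω : ∀ β : ExteriorAlgebra ℝ V4, push (pull₁ ωA * pull₂ β) = β)
    (hpushlow : ∀ k : ℕ, k < 4 → ∀ γ ∈ ⋀[ℝ]^k V4,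
      ∀ β : ExteriorAlgebra ℝ V4, push (pull₁ γ * pull₂ β) = 0)
    -- the 2-forms `λ` and `α`:
    (lam : ExteriorAlgebra ℝ V4) (hlam : lam ∈ ⋀[ℝ]^2 V4)
    (alp : ExteriorAlgebra ℝ V4) (halp : alp ∈ ⋀[ℝ]^2 V4) :
    push (mPull r lam * mPull 1 lam * pull₁ alp) =
      (((r : ℝ) - 1) ^ 2 * integ (alp * lam)) • lam +
        ((r : ℝ) * integ (lam * lam)) • alp := by
  rw [push_mPull_mul_mPull_mul_pull₁ integ hintegω push hpushω hpushlow r 1 hlam hlam halp]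
  simp only [Int.cast_one]
  module

/-- `p₂!( m_r*λ ∧ m*λ ∧ p₁*α ) = (r−1)²·(∫_A αλ)·λ + r·(∫_A λ²)·α`
for all 2-forms `λ, α ∈ Λ²V*`. -/
theorem stmt0 (r : ℤ)
    -- `∫_A : Λ•V* → ℝ`, the coordinate with respect to `ω`:
    (integ : ExteriorAlgebra ℝ V4 →ₗ[ℝ] ℝ)
    (hintegω : integ ωA = 1)
    (hinteglow : ∀ k : ℕ, k < 4 → ∀ γ ∈ ⋀[ℝ]^k V4, integ γ = 0)
    -- `p₂! : Λ•(V₁*⊕V₂*) → Λ•V*`, integration over the first factor: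
    (push : ExteriorAlgebra ℝ (V4 × V4) →ₗ[ℝ] ExteriorAlgebra ℝ V4)
    (hpushω : ∀ β : ExteriorAlgebra ℝ V4, push (pull₁ ωA * pull₂ β) = β)
    (hpushlow : ∀ k : ℕ, k < 4 → ∀ γ ∈ ⋀[ℝ]^k V4,
      ∀ β : ExteriorAlgebra ℝ V4, push (pull₁ γ * pull₂ β) = 0)
    -- the 2-forms `λ` and `α`:
    (lam : ExteriorAlgebra ℝ V4) (hlam : lam ∈ ⋀[ℝ]^2 V4)
    (alp : ExteriorAlgebra ℝ V4) (halp : alp ∈ ⋀[ℝ]^2 V4) :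
    push (mPull r lam * mPull 1 lam * pull₁ alp) =
      (((r : ℝ) - 1) ^ 2 * integ (alp * lam)) • lam +
        ((r : ℝ) * integ (lam * lam)) • alp :=
  stmt0_general r integ hintegω push hpushω hpushlow lam hlam alp halp
end
end

section
/- Let λ := d·f₁*∧f₂* + e·f₃*∧f₄*, let c_λ : V → V* be the contraction map v ↦ ι_v λ, and let Λ²(c_λ) : Λ²V → Λ²V* be its exterior square (modeling the pullback Φ_Λ*). Then for every α ∈ Λ²V*: Λ²(c_λ)( p₂!( p₁*(α) ∧ (P∧P)/2 ) ) = −(∫_A αλ)·λ + ((∫_A λ²)/2)·α. (This is equation (fmp) of the paper: Φ_Λ*{p_{2!}(p₁*α · c₁(𝒫)²/2)} = −(∫_A αλ)·λ + (λ²/2)·α.) -/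
/-!
Model: `V4 = Fin 4 → ℝ` plays the role of both `V*` (with basis `f 0, …, f 3` the `fⱼ*`)
and `V = H¹(Â)` (with basis `f 0, …, f 3` the `fⱼ`); so `Λ•V* = Λ•V = ExteriorAlgebra ℝ V4`.
The cohomology of `A×Â` is `Λ•(V* ⊕ V) = ExteriorAlgebra ℝ (V4 × V4)`, with `q₁` (resp. `q₂`)
the algebra map induced by the inclusion of the first (resp. second) summand, i.e. `p₁*`
(resp. `p₂*`).  `Pc` is the first Chern class of the Poincaré bundle,
`lamP d e = d·f₁*∧f₂* + e·f₃*∧f₄*` the polarization and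
`lamHat d e = −(d·f₃∧f₄ + e·f₁∧f₂)` its Fourier–Mukai transform.
The pushforward `p₂!` (integration over `A`) and the integration functional `∫_A` are
taken to be any linear maps satisfying their defining properties.
-/

noncomputable section

open ExteriorAlgebra

/-- `p₁* : Λ•V* → Λ•(V* ⊕ V)` -/
def q₁ : ExteriorAlgebra ℝ V4 →ₐ[ℝ] ExteriorAlgebra ℝ (V4 × V4) :=
  ExteriorAlgebra.map (LinearMap.inl ℝ V4 V4)

/-- `p₂* : Λ•V → Λ•(V* ⊕ V)` -/
def q₂ : ExteriorAlgebra ℝ V4 →ₐ[ℝ] ExteriorAlgebra ℝ (V4 × V4) :=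
  ExteriorAlgebra.map (LinearMap.inr ℝ V4 V4)

/-- `P = c₁(𝒫) = Σⱼ fⱼ*∧fⱼ ∈ Λ²(V* ⊕ V)` -/
def Pc : ExteriorAlgebra ℝ (V4 × V4) :=
  ∑ j : Fin 4, q₁ (ι ℝ (f j)) * q₂ (ι ℝ (f j))

/-- the polarization `λ = d·f₁*∧f₂* + e·f₃*∧f₄* ∈ Λ²V*` -/
def lamP (d e : ℝ) : ExteriorAlgebra ℝ V4 :=
  d • (ι ℝ (f 0) * ι ℝ (f 1)) + e • (ι ℝ (f 2) * ι ℝ (f 3))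

/-- its Fourier–Mukai transform `λ̂ = −(d·f₃∧f₄ + e·f₁∧f₂) ∈ Λ²V` -/
def lamHat (d e : ℝ) : ExteriorAlgebra ℝ V4 :=
  -(d • (ι ℝ (f 2) * ι ℝ (f 3)) + e • (ι ℝ (f 0) * ι ℝ (f 1)))

/-- the contraction `V* → V`, `ξ ↦ ι_ξ λ̂` (in coordinates, for
`λ̂ = −(d·f₃∧f₄ + e·f₁∧f₂)`): `ι_ξ λ̂ = e·x₂f₁ − e·x₁f₂ + d·x₄f₃ − d·x₃f₄` for
`ξ = Σ xⱼ fⱼ*`. -/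
def contrHat (d e : ℝ) : V4 →ₗ[ℝ] V4 :=
  Matrix.toLin' !![0, e, 0, 0; -e, 0, 0, 0; 0, 0, 0, d; 0, 0, -d, 0]

/-- `f* : Λ•V* → Λ•(V* ⊕ V)`, the algebra map induced by `ξ ↦ (ξ, ι_ξ λ̂)`,
modeling the pullback under `f = m∘(1×Φ_Λ̂) : A×Â → A`. -/
def fPull (d e : ℝ) : ExteriorAlgebra ℝ V4 →ₐ[ℝ] ExteriorAlgebra ℝ (V4 × V4) :=
  ExteriorAlgebra.map (LinearMap.inl ℝ V4 V4 + (LinearMap.inr ℝ V4 V4).comp (contrHat d e))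

/-- the contraction map `c_λ : V → V*`, `v ↦ ι_v λ` for `λ = d·f₁*∧f₂* + e·f₃*∧f₄*`:
`c_λ(f₁) = d·f₂*`, `c_λ(f₂) = −d·f₁*`, `c_λ(f₃) = e·f₄*`, `c_λ(f₄) = −e·f₃*`. -/
def cLam (d e : ℝ) : V4 →ₗ[ℝ] V4 :=
  Matrix.toLin' !![0, -d, 0, 0; d, 0, 0, 0; 0, 0, 0, -e; 0, 0, e, 0]


/-! ### Auxiliary machinery -/

section Aux

abbrev EE := ExteriorAlgebra ℝ V4
abbrev FF := ExteriorAlgebra ℝ (V4 × V4)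

variable {R M : Type*} [CommRing R] [AddCommGroup M] [Module R M]

lemma swapg (x y : M) : ι R y * ι R x = -(ι R x * ι R y) :=
  eq_neg_of_add_eq_zero_left (by rw [add_comm]; exact ι_add_mul_swap x y)

lemma swapg' (x y : M) (z : ExteriorAlgebra R M) :
    ι R y * (ι R x * z) = -(ι R x * (ι R y * z)) := by
  rw [← mul_assoc, swapg, neg_mul, mul_assoc]

lemma sqg' (x : M) (z : ExteriorAlgebra R M) : ι R x * (ι R x * z) = 0 := by
  rw [← mul_assoc, ι_sq_zero, zero_mul]

def u (i : Fin 4) : V4 × V4 := (f i, 0)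
def v (i : Fin 4) : V4 × V4 := (0, f i)

lemma hq1 (i : Fin 4) : q₁ (ι ℝ (f i)) = ι ℝ (u i) := by
  rw [q₁, map_apply_ι]; rfl
lemma hq2 (i : Fin 4) : q₂ (ι ℝ (f i)) = ι ℝ (v i) := by
  rw [q₂, map_apply_ι]; rfl

section SortLemmas
local notation "F" => FF
local notation "E" => EE
@[simp] lemma suu10 : ι ℝ (u 1) * ι ℝ (u 0) = -(ι ℝ (u 0) * ι ℝ (u 1)) := swapg _ _
@[simp] lemma suu10' (z : F) : ι ℝ (u 1) * (ι ℝ (u 0) * z) = -(ι ℝ (u 0) * (ι ℝ (u 1) * z)) := swapg' _ _ _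
@[simp] lemma svv10 : ι ℝ (v 1) * ι ℝ (v 0) = -(ι ℝ (v 0) * ι ℝ (v 1)) := swapg _ _
@[simp] lemma svv10' (z : F) : ι ℝ (v 1) * (ι ℝ (v 0) * z) = -(ι ℝ (v 0) * (ι ℝ (v 1) * z)) := swapg' _ _ _
@[simp] lemma suu20 : ι ℝ (u 2) * ι ℝ (u 0) = -(ι ℝ (u 0) * ι ℝ (u 2)) := swapg _ _
@[simp] lemma suu20' (z : F) : ι ℝ (u 2) * (ι ℝ (u 0) * z) = -(ι ℝ (u 0) * (ι ℝ (u 2) * z)) := swapg' _ _ _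
@[simp] lemma svv20 : ι ℝ (v 2) * ι ℝ (v 0) = -(ι ℝ (v 0) * ι ℝ (v 2)) := swapg _ _
@[simp] lemma svv20' (z : F) : ι ℝ (v 2) * (ι ℝ (v 0) * z) = -(ι ℝ (v 0) * (ι ℝ (v 2) * z)) := swapg' _ _ _
@[simp] lemma suu30 : ι ℝ (u 3) * ι ℝ (u 0) = -(ι ℝ (u 0) * ι ℝ (u 3)) := swapg _ _
@[simp] lemma suu30' (z : F) : ι ℝ (u 3) * (ι ℝ (u 0) * z) = -(ι ℝ (u 0) * (ι ℝ (u 3) * z)) := swapg' _ _ _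
@[simp] lemma svv30 : ι ℝ (v 3) * ι ℝ (v 0) = -(ι ℝ (v 0) * ι ℝ (v 3)) := swapg _ _
@[simp] lemma svv30' (z : F) : ι ℝ (v 3) * (ι ℝ (v 0) * z) = -(ι ℝ (v 0) * (ι ℝ (v 3) * z)) := swapg' _ _ _
@[simp] lemma suu21 : ι ℝ (u 2) * ι ℝ (u 1) = -(ι ℝ (u 1) * ι ℝ (u 2)) := swapg _ _
@[simp] lemma suu21' (z : F) : ι ℝ (u 2) * (ι ℝ (u 1) * z) = -(ι ℝ (u 1) * (ι ℝ (u 2) * z)) := swapg' _ _ _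
@[simp] lemma svv21 : ι ℝ (v 2) * ι ℝ (v 1) = -(ι ℝ (v 1) * ι ℝ (v 2)) := swapg _ _
@[simp] lemma svv21' (z : F) : ι ℝ (v 2) * (ι ℝ (v 1) * z) = -(ι ℝ (v 1) * (ι ℝ (v 2) * z)) := swapg' _ _ _
@[simp] lemma suu31 : ι ℝ (u 3) * ι ℝ (u 1) = -(ι ℝ (u 1) * ι ℝ (u 3)) := swapg _ _
@[simp] lemma suu31' (z : F) : ι ℝ (u 3) * (ι ℝ (u 1) * z) = -(ι ℝ (u 1) * (ι ℝ (u 3) * z)) := swapg' _ _ _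
@[simp] lemma svv31 : ι ℝ (v 3) * ι ℝ (v 1) = -(ι ℝ (v 1) * ι ℝ (v 3)) := swapg _ _
@[simp] lemma svv31' (z : F) : ι ℝ (v 3) * (ι ℝ (v 1) * z) = -(ι ℝ (v 1) * (ι ℝ (v 3) * z)) := swapg' _ _ _
@[simp] lemma suu32 : ι ℝ (u 3) * ι ℝ (u 2) = -(ι ℝ (u 2) * ι ℝ (u 3)) := swapg _ _
@[simp] lemma suu32' (z : F) : ι ℝ (u 3) * (ι ℝ (u 2) * z) = -(ι ℝ (u 2) * (ι ℝ (u 3) * z)) := swapg' _ _ _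
@[simp] lemma svv32 : ι ℝ (v 3) * ι ℝ (v 2) = -(ι ℝ (v 2) * ι ℝ (v 3)) := swapg _ _
@[simp] lemma svv32' (z : F) : ι ℝ (v 3) * (ι ℝ (v 2) * z) = -(ι ℝ (v 2) * (ι ℝ (v 3) * z)) := swapg' _ _ _
@[simp] lemma svu00 : ι ℝ (v 0) * ι ℝ (u 0) = -(ι ℝ (u 0) * ι ℝ (v 0)) := swapg _ _
@[simp] lemma svu00' (z : F) : ι ℝ (v 0) * (ι ℝ (u 0) * z) = -(ι ℝ (u 0) * (ι ℝ (v 0) * z)) := swapg' _ _ _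
@[simp] lemma svu01 : ι ℝ (v 0) * ι ℝ (u 1) = -(ι ℝ (u 1) * ι ℝ (v 0)) := swapg _ _
@[simp] lemma svu01' (z : F) : ι ℝ (v 0) * (ι ℝ (u 1) * z) = -(ι ℝ (u 1) * (ι ℝ (v 0) * z)) := swapg' _ _ _
@[simp] lemma svu02 : ι ℝ (v 0) * ι ℝ (u 2) = -(ι ℝ (u 2) * ι ℝ (v 0)) := swapg _ _
@[simp] lemma svu02' (z : F) : ι ℝ (v 0) * (ι ℝ (u 2) * z) = -(ι ℝ (u 2) * (ι ℝ (v 0) * z)) := swapg' _ _ _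
@[simp] lemma svu03 : ι ℝ (v 0) * ι ℝ (u 3) = -(ι ℝ (u 3) * ι ℝ (v 0)) := swapg _ _
@[simp] lemma svu03' (z : F) : ι ℝ (v 0) * (ι ℝ (u 3) * z) = -(ι ℝ (u 3) * (ι ℝ (v 0) * z)) := swapg' _ _ _
@[simp] lemma svu10 : ι ℝ (v 1) * ι ℝ (u 0) = -(ι ℝ (u 0) * ι ℝ (v 1)) := swapg _ _
@[simp] lemma svu10' (z : F) : ι ℝ (v 1) * (ι ℝ (u 0) * z) = -(ι ℝ (u 0) * (ι ℝ (v 1) * z)) := swapg' _ _ _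
@[simp] lemma svu11 : ι ℝ (v 1) * ι ℝ (u 1) = -(ι ℝ (u 1) * ι ℝ (v 1)) := swapg _ _
@[simp] lemma svu11' (z : F) : ι ℝ (v 1) * (ι ℝ (u 1) * z) = -(ι ℝ (u 1) * (ι ℝ (v 1) * z)) := swapg' _ _ _
@[simp] lemma svu12 : ι ℝ (v 1) * ι ℝ (u 2) = -(ι ℝ (u 2) * ι ℝ (v 1)) := swapg _ _
@[simp] lemma svu12' (z : F) : ι ℝ (v 1) * (ι ℝ (u 2) * z) = -(ι ℝ (u 2) * (ι ℝ (v 1) * z)) := swapg' _ _ _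
@[simp] lemma svu13 : ι ℝ (v 1) * ι ℝ (u 3) = -(ι ℝ (u 3) * ι ℝ (v 1)) := swapg _ _
@[simp] lemma svu13' (z : F) : ι ℝ (v 1) * (ι ℝ (u 3) * z) = -(ι ℝ (u 3) * (ι ℝ (v 1) * z)) := swapg' _ _ _
@[simp] lemma svu20 : ι ℝ (v 2) * ι ℝ (u 0) = -(ι ℝ (u 0) * ι ℝ (v 2)) := swapg _ _
@[simp] lemma svu20' (z : F) : ι ℝ (v 2) * (ι ℝ (u 0) * z) = -(ι ℝ (u 0) * (ι ℝ (v 2) * z)) := swapg' _ _ _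
@[simp] lemma svu21 : ι ℝ (v 2) * ι ℝ (u 1) = -(ι ℝ (u 1) * ι ℝ (v 2)) := swapg _ _
@[simp] lemma svu21' (z : F) : ι ℝ (v 2) * (ι ℝ (u 1) * z) = -(ι ℝ (u 1) * (ι ℝ (v 2) * z)) := swapg' _ _ _
@[simp] lemma svu22 : ι ℝ (v 2) * ι ℝ (u 2) = -(ι ℝ (u 2) * ι ℝ (v 2)) := swapg _ _
@[simp] lemma svu22' (z : F) : ι ℝ (v 2) * (ι ℝ (u 2) * z) = -(ι ℝ (u 2) * (ι ℝ (v 2) * z)) := swapg' _ _ _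
@[simp] lemma svu23 : ι ℝ (v 2) * ι ℝ (u 3) = -(ι ℝ (u 3) * ι ℝ (v 2)) := swapg _ _
@[simp] lemma svu23' (z : F) : ι ℝ (v 2) * (ι ℝ (u 3) * z) = -(ι ℝ (u 3) * (ι ℝ (v 2) * z)) := swapg' _ _ _
@[simp] lemma svu30 : ι ℝ (v 3) * ι ℝ (u 0) = -(ι ℝ (u 0) * ι ℝ (v 3)) := swapg _ _
@[simp] lemma svu30' (z : F) : ι ℝ (v 3) * (ι ℝ (u 0) * z) = -(ι ℝ (u 0) * (ι ℝ (v 3) * z)) := swapg' _ _ _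
@[simp] lemma svu31 : ι ℝ (v 3) * ι ℝ (u 1) = -(ι ℝ (u 1) * ι ℝ (v 3)) := swapg _ _
@[simp] lemma svu31' (z : F) : ι ℝ (v 3) * (ι ℝ (u 1) * z) = -(ι ℝ (u 1) * (ι ℝ (v 3) * z)) := swapg' _ _ _
@[simp] lemma svu32 : ι ℝ (v 3) * ι ℝ (u 2) = -(ι ℝ (u 2) * ι ℝ (v 3)) := swapg _ _
@[simp] lemma svu32' (z : F) : ι ℝ (v 3) * (ι ℝ (u 2) * z) = -(ι ℝ (u 2) * (ι ℝ (v 3) * z)) := swapg' _ _ _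
@[simp] lemma svu33 : ι ℝ (v 3) * ι ℝ (u 3) = -(ι ℝ (u 3) * ι ℝ (v 3)) := swapg _ _
@[simp] lemma svu33' (z : F) : ι ℝ (v 3) * (ι ℝ (u 3) * z) = -(ι ℝ (u 3) * (ι ℝ (v 3) * z)) := swapg' _ _ _
@[simp] lemma sff10 : ι ℝ (f 1) * ι ℝ (f 0) = -(ι ℝ (f 0) * ι ℝ (f 1)) := swapg _ _
@[simp] lemma sff10' (z : E) : ι ℝ (f 1) * (ι ℝ (f 0) * z) = -(ι ℝ (f 0) * (ι ℝ (f 1) * z)) := swapg' _ _ _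
@[simp] lemma sff20 : ι ℝ (f 2) * ι ℝ (f 0) = -(ι ℝ (f 0) * ι ℝ (f 2)) := swapg _ _
@[simp] lemma sff20' (z : E) : ι ℝ (f 2) * (ι ℝ (f 0) * z) = -(ι ℝ (f 0) * (ι ℝ (f 2) * z)) := swapg' _ _ _
@[simp] lemma sff30 : ι ℝ (f 3) * ι ℝ (f 0) = -(ι ℝ (f 0) * ι ℝ (f 3)) := swapg _ _
@[simp] lemma sff30' (z : E) : ι ℝ (f 3) * (ι ℝ (f 0) * z) = -(ι ℝ (f 0) * (ι ℝ (f 3) * z)) := swapg' _ _ _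
@[simp] lemma sff21 : ι ℝ (f 2) * ι ℝ (f 1) = -(ι ℝ (f 1) * ι ℝ (f 2)) := swapg _ _
@[simp] lemma sff21' (z : E) : ι ℝ (f 2) * (ι ℝ (f 1) * z) = -(ι ℝ (f 1) * (ι ℝ (f 2) * z)) := swapg' _ _ _
@[simp] lemma sff31 : ι ℝ (f 3) * ι ℝ (f 1) = -(ι ℝ (f 1) * ι ℝ (f 3)) := swapg _ _
@[simp] lemma sff31' (z : E) : ι ℝ (f 3) * (ι ℝ (f 1) * z) = -(ι ℝ (f 1) * (ι ℝ (f 3) * z)) := swapg' _ _ _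
@[simp] lemma sff32 : ι ℝ (f 3) * ι ℝ (f 2) = -(ι ℝ (f 2) * ι ℝ (f 3)) := swapg _ _
@[simp] lemma sff32' (z : E) : ι ℝ (f 3) * (ι ℝ (f 2) * z) = -(ι ℝ (f 2) * (ι ℝ (f 3) * z)) := swapg' _ _ _

end SortLemmas

section Keys
set_option maxHeartbeats 2000000
lemma key01 : q₁ (ι ℝ (f 0) * ι ℝ (f 1)) * (((1:ℝ)/2) • (Pc * Pc)) =
    -(q₁ ωA * q₂ (ι ℝ (f 2) * ι ℝ (f 3))) := by
  simp only [Pc, Fin.sum_univ_four, ωA, map_mul, hq1, hq2, mul_add, add_mul,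
    mul_neg, neg_mul, neg_neg, mul_smul_comm, smul_add, smul_neg,
    ι_sq_zero, sqg', zero_mul, mul_zero, smul_zero, neg_zero, add_zero, zero_add,
    suu10, suu10', suu20, suu20', suu30, suu30', suu21, suu21', suu31, suu31', suu32, suu32',
    svv10, svv10', svv20, svv20', svv30, svv30', svv21, svv21', svv31, svv31', svv32, svv32',
    svu00, svu00', svu01, svu01', svu02, svu02', svu03, svu03',
    svu10, svu10', svu11, svu11', svu12, svu12', svu13, svu13',
    svu20, svu20', svu21, svu21', svu22, svu22', svu23, svu23',
    svu30, svu30', svu31, svu31', svu32, svu32', svu33, svu33', mul_assoc]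
  module

lemma key02 : q₁ (ι ℝ (f 0) * ι ℝ (f 2)) * (((1:ℝ)/2) • (Pc * Pc)) =
    q₁ ωA * q₂ (ι ℝ (f 1) * ι ℝ (f 3)) := by
  simp only [Pc, Fin.sum_univ_four, ωA, map_mul, hq1, hq2, mul_add, add_mul,
    mul_neg, neg_mul, neg_neg, mul_smul_comm, smul_add, smul_neg,
    ι_sq_zero, sqg', zero_mul, mul_zero, smul_zero, neg_zero, add_zero, zero_add,
    suu10, suu10', suu20, suu20', suu30, suu30', suu21, suu21', suu31, suu31', suu32, suu32',
    svv10, svv10', svv20, svv20', svv30, svv30', svv21, svv21', svv31, svv31', svv32, svv32',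
    svu00, svu00', svu01, svu01', svu02, svu02', svu03, svu03',
    svu10, svu10', svu11, svu11', svu12, svu12', svu13, svu13',
    svu20, svu20', svu21, svu21', svu22, svu22', svu23, svu23',
    svu30, svu30', svu31, svu31', svu32, svu32', svu33, svu33', mul_assoc]
  module

lemma key03 : q₁ (ι ℝ (f 0) * ι ℝ (f 3)) * (((1:ℝ)/2) • (Pc * Pc)) =
    -(q₁ ωA * q₂ (ι ℝ (f 1) * ι ℝ (f 2))) := by
  simp only [Pc, Fin.sum_univ_four, ωA, map_mul, hq1, hq2, mul_add, add_mul,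
    mul_neg, neg_mul, neg_neg, mul_smul_comm, smul_add, smul_neg,
    ι_sq_zero, sqg', zero_mul, mul_zero, smul_zero, neg_zero, add_zero, zero_add,
    suu10, suu10', suu20, suu20', suu30, suu30', suu21, suu21', suu31, suu31', suu32, suu32',
    svv10, svv10', svv20, svv20', svv30, svv30', svv21, svv21', svv31, svv31', svv32, svv32',
    svu00, svu00', svu01, svu01', svu02, svu02', svu03, svu03',
    svu10, svu10', svu11, svu11', svu12, svu12', svu13, svu13',
    svu20, svu20', svu21, svu21', svu22, svu22', svu23, svu23',
    svu30, svu30', svu31, svu31', svu32, svu32', svu33, svu33', mul_assoc]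
  module

lemma key12 : q₁ (ι ℝ (f 1) * ι ℝ (f 2)) * (((1:ℝ)/2) • (Pc * Pc)) =
    -(q₁ ωA * q₂ (ι ℝ (f 0) * ι ℝ (f 3))) := by
  simp only [Pc, Fin.sum_univ_four, ωA, map_mul, hq1, hq2, mul_add, add_mul,
    mul_neg, neg_mul, neg_neg, mul_smul_comm, smul_add, smul_neg,
    ι_sq_zero, sqg', zero_mul, mul_zero, smul_zero, neg_zero, add_zero, zero_add,
    suu10, suu10', suu20, suu20', suu30, suu30', suu21, suu21', suu31, suu31', suu32, suu32',
    svv10, svv10', svv20, svv20', svv30, svv30', svv21, svv21', svv31, svv31', svv32, svv32',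
    svu00, svu00', svu01, svu01', svu02, svu02', svu03, svu03',
    svu10, svu10', svu11, svu11', svu12, svu12', svu13, svu13',
    svu20, svu20', svu21, svu21', svu22, svu22', svu23, svu23',
    svu30, svu30', svu31, svu31', svu32, svu32', svu33, svu33', mul_assoc]
  module

lemma key13 : q₁ (ι ℝ (f 1) * ι ℝ (f 3)) * (((1:ℝ)/2) • (Pc * Pc)) =
    q₁ ωA * q₂ (ι ℝ (f 0) * ι ℝ (f 2)) := by
  simp only [Pc, Fin.sum_univ_four, ωA, map_mul, hq1, hq2, mul_add, add_mul,
    mul_neg, neg_mul, neg_neg, mul_smul_comm, smul_add, smul_neg,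
    ι_sq_zero, sqg', zero_mul, mul_zero, smul_zero, neg_zero, add_zero, zero_add,
    suu10, suu10', suu20, suu20', suu30, suu30', suu21, suu21', suu31, suu31', suu32, suu32',
    svv10, svv10', svv20, svv20', svv30, svv30', svv21, svv21', svv31, svv31', svv32, svv32',
    svu00, svu00', svu01, svu01', svu02, svu02', svu03, svu03',
    svu10, svu10', svu11, svu11', svu12, svu12', svu13, svu13',
    svu20, svu20', svu21, svu21', svu22, svu22', svu23, svu23',
    svu30, svu30', svu31, svu31', svu32, svu32', svu33, svu33', mul_assoc]
  module

lemma key23 : q₁ (ι ℝ (f 2) * ι ℝ (f 3)) * (((1:ℝ)/2) • (Pc * Pc)) =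
    -(q₁ ωA * q₂ (ι ℝ (f 0) * ι ℝ (f 1))) := by
  simp only [Pc, Fin.sum_univ_four, ωA, map_mul, hq1, hq2, mul_add, add_mul,
    mul_neg, neg_mul, neg_neg, mul_smul_comm, smul_add, smul_neg,
    ι_sq_zero, sqg', zero_mul, mul_zero, smul_zero, neg_zero, add_zero, zero_add,
    suu10, suu10', suu20, suu20', suu30, suu30', suu21, suu21', suu31, suu31', suu32, suu32',
    svv10, svv10', svv20, svv20', svv30, svv30', svv21, svv21', svv31, svv31', svv32, svv32',
    svu00, svu00', svu01, svu01', svu02, svu02', svu03, svu03',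
    svu10, svu10', svu11, svu11', svu12, svu12', svu13, svu13',
    svu20, svu20', svu21, svu21', svu22, svu22', svu23, svu23',
    svu30, svu30', svu31, svu31', svu32, svu32', svu33, svu33', mul_assoc]
  module


end Keys

lemma hcl0 (d e : ℝ) : cLam d e (f 0) = d • f 1 := by
  ext i; fin_cases i <;>
    simp [cLam, f, Matrix.toLin'_apply, Matrix.mulVec, dotProduct,
      Fin.sum_univ_four, Pi.single_apply]
lemma hcl1 (d e : ℝ) : cLam d e (f 1) = (-d) • f 0 := by
  ext i; fin_cases i <;>
    simp [cLam, f, Matrix.toLin'_apply, Matrix.mulVec, dotProduct,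
      Fin.sum_univ_four, Pi.single_apply]
lemma hcl2 (d e : ℝ) : cLam d e (f 2) = e • f 3 := by
  ext i; fin_cases i <;>
    simp [cLam, f, Matrix.toLin'_apply, Matrix.mulVec, dotProduct,
      Fin.sum_univ_four, Pi.single_apply]
lemma hcl3 (d e : ℝ) : cLam d e (f 3) = (-e) • f 2 := by
  ext i; fin_cases i <;>
    simp [cLam, f, Matrix.toLin'_apply, Matrix.mulVec, dotProduct,
      Fin.sum_univ_four, Pi.single_apply]

def TT : Set EE := {x | ∃ i j : Fin 4, x = ι ℝ (f i) * ι ℝ (f j)}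

lemma mem_spanT {alp : EE} (halp : alp ∈ ⋀[ℝ]^2 V4) : alp ∈ Submodule.span ℝ TT := by
  have hr : LinearMap.range (ι ℝ : V4 →ₗ[ℝ] EE)
      = Submodule.span ℝ (Set.range fun i => ι ℝ (f i)) := by
    conv_lhs => rw [← Submodule.map_top, ← (Pi.basisFun ℝ (Fin 4)).span_eq]
    rw [Submodule.map_span, ← Set.range_comp]
    congr 1
    ext x
    constructor
    · rintro ⟨i, rfl⟩; exact ⟨i, by simp [f, Function.comp]⟩
    · rintro ⟨i, rfl⟩; exact ⟨i, by simp [f, Function.comp]⟩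
  have h2 : (⋀[ℝ]^2 V4 : Submodule ℝ EE) ≤ Submodule.span ℝ TT := by
    rw [show (⋀[ℝ]^2 V4 : Submodule ℝ EE)
        = LinearMap.range (ι ℝ : V4 →ₗ[ℝ] EE) ^ 2 from rfl, pow_two, hr,
      Submodule.span_mul_span]
    apply Submodule.span_mono
    rintro z ⟨x, ⟨i, rfl⟩, y, ⟨j, rfl⟩, rfl⟩
    exact ⟨i, j, rfl⟩
  exact h2 halp

end Aux

set_option maxHeartbeats 2000000 in
/-- `Λ²(c_λ)( p₂!( p₁*(α) ∧ (P∧P)/2 ) ) = −(∫_A αλ)·λ + ((∫_A λ²)/2)·α`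
for every 2-form `α ∈ Λ²V*`, where `Λ²(c_λ)` is the exterior-algebra functorial
extension of `c_λ` (its exterior square on degree-2 classes). -/
theorem stmt4 (d e : ℝ)
    -- `∫_A : Λ•V* → ℝ`, the coordinate with respect to `ω`:
    (integ : ExteriorAlgebra ℝ V4 →ₗ[ℝ] ℝ)
    (hintegω : integ ωA = 1)
    (hinteglow : ∀ k : ℕ, k < 4 → ∀ γ ∈ ⋀[ℝ]^k V4, integ γ = 0)
    -- `p₂! : Λ•(V* ⊕ V) → Λ•V`, integration over `A`:
    (push : ExteriorAlgebra ℝ (V4 × V4) →ₗ[ℝ] ExteriorAlgebra ℝ V4)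
    (hpushω : ∀ μ : ExteriorAlgebra ℝ V4, push (q₁ ωA * q₂ μ) = μ)
    (hpushlow : ∀ k : ℕ, k < 4 → ∀ γ ∈ ⋀[ℝ]^k V4,
      ∀ μ : ExteriorAlgebra ℝ V4, push (q₁ γ * q₂ μ) = 0)
    -- the 2-form `α ∈ Λ²V*`:
    (alp : ExteriorAlgebra ℝ V4) (halp : alp ∈ ⋀[ℝ]^2 V4) :
    ExteriorAlgebra.map (cLam d e) (push (q₁ alp * (((1 : ℝ)/2) • (Pc * Pc)))) =
      (-(integ (alp * lamP d e))) • lamP d e +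
        (integ (lamP d e * lamP d e) / 2) • alp := by
  have hω' : integ (ι ℝ (f 0) * (ι ℝ (f 1) * (ι ℝ (f 2) * ι ℝ (f 3)))) = 1 := by
    simpa only [ωA, mul_assoc] using hintegω
  have h01 : ExteriorAlgebra.map (cLam d e)
      (push (q₁ (ι ℝ (f 0) * ι ℝ (f 1)) * (((1 : ℝ)/2) • (Pc * Pc)))) =
      (-(integ ((ι ℝ (f 0) * ι ℝ (f 1)) * lamP d e))) • lamP d e +
        (integ (lamP d e * lamP d e) / 2) • (ι ℝ (f 0) * ι ℝ (f 1)) := by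
    rw [key01, map_neg, hpushω, map_neg]
    simp only [lamP, map_mul, map_apply_ι, hcl0, hcl1, hcl2, hcl3, LinearMap.map_smul,
      map_smul, map_add, map_neg, map_zero, mul_add, add_mul, smul_add, smul_neg,
      mul_smul_comm, smul_mul_assoc, mul_neg, neg_mul, neg_neg, ι_sq_zero, sqg',
      zero_mul, mul_zero, smul_zero, neg_zero, add_zero, zero_add, hω',
      sff10, sff10', sff20, sff20', sff30, sff30', sff21, sff21', sff31, sff31',
      sff32, sff32', mul_assoc, smul_smul, smul_eq_mul, mul_one, one_mul]
    module
  have h02 : ExteriorAlgebra.map (cLam d e)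
      (push (q₁ (ι ℝ (f 0) * ι ℝ (f 2)) * (((1 : ℝ)/2) • (Pc * Pc)))) =
      (-(integ ((ι ℝ (f 0) * ι ℝ (f 2)) * lamP d e))) • lamP d e +
        (integ (lamP d e * lamP d e) / 2) • (ι ℝ (f 0) * ι ℝ (f 2)) := by
    rw [key02, hpushω]
    simp only [lamP, map_mul, map_apply_ι, hcl0, hcl1, hcl2, hcl3, LinearMap.map_smul,
      map_smul, map_add, map_neg, map_zero, mul_add, add_mul, smul_add, smul_neg,
      mul_smul_comm, smul_mul_assoc, mul_neg, neg_mul, neg_neg, ι_sq_zero, sqg',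
      zero_mul, mul_zero, smul_zero, neg_zero, add_zero, zero_add, hω',
      sff10, sff10', sff20, sff20', sff30, sff30', sff21, sff21', sff31, sff31',
      sff32, sff32', mul_assoc, smul_smul, smul_eq_mul, mul_one, one_mul]
    module
  have h03 : ExteriorAlgebra.map (cLam d e)
      (push (q₁ (ι ℝ (f 0) * ι ℝ (f 3)) * (((1 : ℝ)/2) • (Pc * Pc)))) =
      (-(integ ((ι ℝ (f 0) * ι ℝ (f 3)) * lamP d e))) • lamP d e +
        (integ (lamP d e * lamP d e) / 2) • (ι ℝ (f 0) * ι ℝ (f 3)) := by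
    rw [key03, map_neg, hpushω, map_neg]
    simp only [lamP, map_mul, map_apply_ι, hcl0, hcl1, hcl2, hcl3, LinearMap.map_smul,
      map_smul, map_add, map_neg, map_zero, mul_add, add_mul, smul_add, smul_neg,
      mul_smul_comm, smul_mul_assoc, mul_neg, neg_mul, neg_neg, ι_sq_zero, sqg',
      zero_mul, mul_zero, smul_zero, neg_zero, add_zero, zero_add, hω',
      sff10, sff10', sff20, sff20', sff30, sff30', sff21, sff21', sff31, sff31',
      sff32, sff32', mul_assoc, smul_smul, smul_eq_mul, mul_one, one_mul]
    module
  have h12 : ExteriorAlgebra.map (cLam d e)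
      (push (q₁ (ι ℝ (f 1) * ι ℝ (f 2)) * (((1 : ℝ)/2) • (Pc * Pc)))) =
      (-(integ ((ι ℝ (f 1) * ι ℝ (f 2)) * lamP d e))) • lamP d e +
        (integ (lamP d e * lamP d e) / 2) • (ι ℝ (f 1) * ι ℝ (f 2)) := by
    rw [key12, map_neg, hpushω, map_neg]
    simp only [lamP, map_mul, map_apply_ι, hcl0, hcl1, hcl2, hcl3, LinearMap.map_smul,
      map_smul, map_add, map_neg, map_zero, mul_add, add_mul, smul_add, smul_neg,
      mul_smul_comm, smul_mul_assoc, mul_neg, neg_mul, neg_neg, ι_sq_zero, sqg',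
      zero_mul, mul_zero, smul_zero, neg_zero, add_zero, zero_add, hω',
      sff10, sff10', sff20, sff20', sff30, sff30', sff21, sff21', sff31, sff31',
      sff32, sff32', mul_assoc, smul_smul, smul_eq_mul, mul_one, one_mul]
    module
  have h13 : ExteriorAlgebra.map (cLam d e)
      (push (q₁ (ι ℝ (f 1) * ι ℝ (f 3)) * (((1 : ℝ)/2) • (Pc * Pc)))) =
      (-(integ ((ι ℝ (f 1) * ι ℝ (f 3)) * lamP d e))) • lamP d e +
        (integ (lamP d e * lamP d e) / 2) • (ι ℝ (f 1) * ι ℝ (f 3)) := by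
    rw [key13, hpushω]
    simp only [lamP, map_mul, map_apply_ι, hcl0, hcl1, hcl2, hcl3, LinearMap.map_smul,
      map_smul, map_add, map_neg, map_zero, mul_add, add_mul, smul_add, smul_neg,
      mul_smul_comm, smul_mul_assoc, mul_neg, neg_mul, neg_neg, ι_sq_zero, sqg',
      zero_mul, mul_zero, smul_zero, neg_zero, add_zero, zero_add, hω',
      sff10, sff10', sff20, sff20', sff30, sff30', sff21, sff21', sff31, sff31',
      sff32, sff32', mul_assoc, smul_smul, smul_eq_mul, mul_one, one_mul]
    module
  have h23 : ExteriorAlgebra.map (cLam d e)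
      (push (q₁ (ι ℝ (f 2) * ι ℝ (f 3)) * (((1 : ℝ)/2) • (Pc * Pc)))) =
      (-(integ ((ι ℝ (f 2) * ι ℝ (f 3)) * lamP d e))) • lamP d e +
        (integ (lamP d e * lamP d e) / 2) • (ι ℝ (f 2) * ι ℝ (f 3)) := by
    rw [key23, map_neg, hpushω, map_neg]
    simp only [lamP, map_mul, map_apply_ι, hcl0, hcl1, hcl2, hcl3, LinearMap.map_smul,
      map_smul, map_add, map_neg, map_zero, mul_add, add_mul, smul_add, smul_neg,
      mul_smul_comm, smul_mul_assoc, mul_neg, neg_mul, neg_neg, ι_sq_zero, sqg',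
      zero_mul, mul_zero, smul_zero, neg_zero, add_zero, zero_add, hω',
      sff10, sff10', sff20, sff20', sff30, sff30', sff21, sff21', sff31, sff31',
      sff32, sff32', mul_assoc, smul_smul, smul_eq_mul, mul_one, one_mul]
    module
  have h00 : ExteriorAlgebra.map (cLam d e)
      (push (q₁ (ι ℝ (f 0) * ι ℝ (f 0)) * (((1 : ℝ)/2) • (Pc * Pc)))) =
      (-(integ ((ι ℝ (f 0) * ι ℝ (f 0)) * lamP d e))) • lamP d e +
        (integ (lamP d e * lamP d e) / 2) • (ι ℝ (f 0) * ι ℝ (f 0)) := by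
    rw [ι_sq_zero]
    simp
  have h10 : ExteriorAlgebra.map (cLam d e)
      (push (q₁ (ι ℝ (f 1) * ι ℝ (f 0)) * (((1 : ℝ)/2) • (Pc * Pc)))) =
      (-(integ ((ι ℝ (f 1) * ι ℝ (f 0)) * lamP d e))) • lamP d e +
        (integ (lamP d e * lamP d e) / 2) • (ι ℝ (f 1) * ι ℝ (f 0)) := by
    rw [sff10]
    simp only [map_neg, neg_mul, mul_neg, smul_neg, neg_neg, LinearMap.map_neg]
    rw [h01]
    module
  have h11 : ExteriorAlgebra.map (cLam d e)
      (push (q₁ (ι ℝ (f 1) * ι ℝ (f 1)) * (((1 : ℝ)/2) • (Pc * Pc)))) =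
      (-(integ ((ι ℝ (f 1) * ι ℝ (f 1)) * lamP d e))) • lamP d e +
        (integ (lamP d e * lamP d e) / 2) • (ι ℝ (f 1) * ι ℝ (f 1)) := by
    rw [ι_sq_zero]
    simp
  have h20 : ExteriorAlgebra.map (cLam d e)
      (push (q₁ (ι ℝ (f 2) * ι ℝ (f 0)) * (((1 : ℝ)/2) • (Pc * Pc)))) =
      (-(integ ((ι ℝ (f 2) * ι ℝ (f 0)) * lamP d e))) • lamP d e +
        (integ (lamP d e * lamP d e) / 2) • (ι ℝ (f 2) * ι ℝ (f 0)) := by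
    rw [sff20]
    simp only [map_neg, neg_mul, mul_neg, smul_neg, neg_neg, LinearMap.map_neg]
    rw [h02]
    module
  have h21 : ExteriorAlgebra.map (cLam d e)
      (push (q₁ (ι ℝ (f 2) * ι ℝ (f 1)) * (((1 : ℝ)/2) • (Pc * Pc)))) =
      (-(integ ((ι ℝ (f 2) * ι ℝ (f 1)) * lamP d e))) • lamP d e +
        (integ (lamP d e * lamP d e) / 2) • (ι ℝ (f 2) * ι ℝ (f 1)) := by
    rw [sff21]
    simp only [map_neg, neg_mul, mul_neg, smul_neg, neg_neg, LinearMap.map_neg]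
    rw [h12]
    module
  have h22 : ExteriorAlgebra.map (cLam d e)
      (push (q₁ (ι ℝ (f 2) * ι ℝ (f 2)) * (((1 : ℝ)/2) • (Pc * Pc)))) =
      (-(integ ((ι ℝ (f 2) * ι ℝ (f 2)) * lamP d e))) • lamP d e +
        (integ (lamP d e * lamP d e) / 2) • (ι ℝ (f 2) * ι ℝ (f 2)) := by
    rw [ι_sq_zero]
    simp
  have h30 : ExteriorAlgebra.map (cLam d e)
      (push (q₁ (ι ℝ (f 3) * ι ℝ (f 0)) * (((1 : ℝ)/2) • (Pc * Pc)))) =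
      (-(integ ((ι ℝ (f 3) * ι ℝ (f 0)) * lamP d e))) • lamP d e +
        (integ (lamP d e * lamP d e) / 2) • (ι ℝ (f 3) * ι ℝ (f 0)) := by
    rw [sff30]
    simp only [map_neg, neg_mul, mul_neg, smul_neg, neg_neg, LinearMap.map_neg]
    rw [h03]
    module
  have h31 : ExteriorAlgebra.map (cLam d e)
      (push (q₁ (ι ℝ (f 3) * ι ℝ (f 1)) * (((1 : ℝ)/2) • (Pc * Pc)))) =
      (-(integ ((ι ℝ (f 3) * ι ℝ (f 1)) * lamP d e))) • lamP d e +
        (integ (lamP d e * lamP d e) / 2) • (ι ℝ (f 3) * ι ℝ (f 1)) := by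
    rw [sff31]
    simp only [map_neg, neg_mul, mul_neg, smul_neg, neg_neg, LinearMap.map_neg]
    rw [h13]
    module
  have h32 : ExteriorAlgebra.map (cLam d e)
      (push (q₁ (ι ℝ (f 3) * ι ℝ (f 2)) * (((1 : ℝ)/2) • (Pc * Pc)))) =
      (-(integ ((ι ℝ (f 3) * ι ℝ (f 2)) * lamP d e))) • lamP d e +
        (integ (lamP d e * lamP d e) / 2) • (ι ℝ (f 3) * ι ℝ (f 2)) := by
    rw [sff32]
    simp only [map_neg, neg_mul, mul_neg, smul_neg, neg_neg, LinearMap.map_neg]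
    rw [h23]
    module
  have h33 : ExteriorAlgebra.map (cLam d e)
      (push (q₁ (ι ℝ (f 3) * ι ℝ (f 3)) * (((1 : ℝ)/2) • (Pc * Pc)))) =
      (-(integ ((ι ℝ (f 3) * ι ℝ (f 3)) * lamP d e))) • lamP d e +
        (integ (lamP d e * lamP d e) / 2) • (ι ℝ (f 3) * ι ℝ (f 3)) := by
    rw [ι_sq_zero]
    simp
  have base : ∀ i j : Fin 4,
      ExteriorAlgebra.map (cLam d e)
        (push (q₁ (ι ℝ (f i) * ι ℝ (f j)) * (((1 : ℝ)/2) • (Pc * Pc)))) =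
      (-(integ ((ι ℝ (f i) * ι ℝ (f j)) * lamP d e))) • lamP d e +
        (integ (lamP d e * lamP d e) / 2) • (ι ℝ (f i) * ι ℝ (f j)) := by
    intro i j
    fin_cases i <;> fin_cases j
    · exact h00
    · exact h01
    · exact h02
    · exact h03
    · exact h10
    · exact h11
    · exact h12
    · exact h13
    · exact h20
    · exact h21
    · exact h22
    · exact h23
    · exact h30
    · exact h31
    · exact h32
    · exact h33
  have main : ∀ x ∈ Submodule.span ℝ TT,
      ExteriorAlgebra.map (cLam d e) (push (q₁ x * (((1 : ℝ)/2) • (Pc * Pc)))) =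
      (-(integ (x * lamP d e))) • lamP d e +
        (integ (lamP d e * lamP d e) / 2) • x := by
    intro x hx
    induction hx using Submodule.span_induction with
    | mem x hxT => obtain ⟨i, j, rfl⟩ := hxT; exact base i j
    | zero => simp
    | add a b ha hb iha ihb =>
      simp only [map_add, add_mul] at iha ihb ⊢
      rw [iha, ihb]
      module
    | smul r a ha iha =>
      simp only [map_smul, smul_mul_assoc, smul_eq_mul] at iha ⊢
      rw [iha]
      module
  exact main alp (mem_spanT halp)
end
end

section
/- One has p₂!( p₁*(λ) ∧ (P∧P)/2 ) = λ̂ in Λ²V; that is, the Fourier–Mukai transform of the symplectic 2-form λ = d·f₁*∧f₂* + e·f₃*∧f₄* is λ̂ = −(d·f₃∧f₄ + e·f₁∧f₂). (This is the identity p_{2!}(c₁(𝒫)²/2 · p₁*λ) = λ̂ used in the proof of Proposition 'split1' in Section 5.) -/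
/-!
Model: `V4 = Fin 4 → ℝ` plays the role of both `V*` (with basis `f 0, …, f 3` the `fⱼ*`)
and `V = H¹(Â)` (with basis `f 0, …, f 3` the `fⱼ`); so `Λ•V* = Λ•V = ExteriorAlgebra ℝ V4`.
The cohomology of `A×Â` is `Λ•(V* ⊕ V) = ExteriorAlgebra ℝ (V4 × V4)`, with `q₁` (resp. `q₂`)
the algebra map induced by the inclusion of the first (resp. second) summand, i.e. `p₁*`
(resp. `p₂*`).  `Pc` is the first Chern class of the Poincaré bundle,
`lamP d e = d·f₁*∧f₂* + e·f₃*∧f₄*` the polarization and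
`lamHat d e = −(d·f₃∧f₄ + e·f₁∧f₂)` its Fourier–Mukai transform.
The pushforward `p₂!` (integration over `A`) and the integration functional `∫_A` are
taken to be any linear maps satisfying their defining properties.
-/

noncomputable section

open ExteriorAlgebra

set_option maxHeartbeats 2000000 in
private lemma key_identity (d e : ℝ) : q₁ (lamP d e) * (Pc * Pc) = q₁ ωA * q₂ ((2:ℝ) • lamHat d e) := by
  have swap : ∀ x y : V4 × V4, ι ℝ x * ι ℝ y = -(ι ℝ y * ι ℝ x) := fun x y =>
    eq_neg_of_add_eq_zero_left (ι_add_mul_swap x y)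
  have swap' : ∀ (x y : V4 × V4) (z : ExteriorAlgebra ℝ (V4 × V4)),
      ι ℝ x * (ι ℝ y * z) = -(ι ℝ y * (ι ℝ x * z)) := by
    intro x y z
    rw [← mul_assoc, swap, ← mul_assoc, neg_mul]
  set a : Fin 4 → ExteriorAlgebra ℝ (V4 × V4) := fun i => ι ℝ ((f i, 0) : V4 × V4) with ha
  set b : Fin 4 → ExteriorAlgebra ℝ (V4 × V4) := fun i => ι ℝ (((0:V4), f i) : V4 × V4) with hb
  have hq1 : ∀ i, q₁ (ι ℝ (f i)) = a i := fun i => ExteriorAlgebra.map_apply_ι _ _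
  have hq2 : ∀ i, q₂ (ι ℝ (f i)) = b i := fun i => ExteriorAlgebra.map_apply_ι _ _
  have hba : ∀ i j (z : ExteriorAlgebra ℝ (V4 × V4)), b i * (a j * z) = -(a j * (b i * z)) :=
    fun i j z => swap' _ _ z
  have hba' : ∀ i j, b i * a j = -(a j * b i) := fun i j => swap _ _
  have h10 : ∀ z, a 1 * (a 0 * z) = -(a 0 * (a 1 * z)) := fun z => swap' _ _ z
  have h20 : ∀ z, a 2 * (a 0 * z) = -(a 0 * (a 2 * z)) := fun z => swap' _ _ z
  have h21 : ∀ z, a 2 * (a 1 * z) = -(a 1 * (a 2 * z)) := fun z => swap' _ _ z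
  have h30 : ∀ z, a 3 * (a 0 * z) = -(a 0 * (a 3 * z)) := fun z => swap' _ _ z
  have h31 : ∀ z, a 3 * (a 1 * z) = -(a 1 * (a 3 * z)) := fun z => swap' _ _ z
  have h32 : ∀ z, a 3 * (a 2 * z) = -(a 2 * (a 3 * z)) := fun z => swap' _ _ z
  have h10' : a 1 * a 0 = -(a 0 * a 1) := swap _ _
  have h20' : a 2 * a 0 = -(a 0 * a 2) := swap _ _
  have h21' : a 2 * a 1 = -(a 1 * a 2) := swap _ _
  have h30' : a 3 * a 0 = -(a 0 * a 3) := swap _ _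
  have h31' : a 3 * a 1 = -(a 1 * a 3) := swap _ _
  have h32' : a 3 * a 2 = -(a 2 * a 3) := swap _ _
  have g10 : ∀ z, b 1 * (b 0 * z) = -(b 0 * (b 1 * z)) := fun z => swap' _ _ z
  have g10' : b 1 * b 0 = -(b 0 * b 1) := swap _ _
  have g20 : ∀ z, b 2 * (b 0 * z) = -(b 0 * (b 2 * z)) := fun z => swap' _ _ z
  have g20' : b 2 * b 0 = -(b 0 * b 2) := swap _ _
  have g21 : ∀ z, b 2 * (b 1 * z) = -(b 1 * (b 2 * z)) := fun z => swap' _ _ z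
  have g21' : b 2 * b 1 = -(b 1 * b 2) := swap _ _
  have g30 : ∀ z, b 3 * (b 0 * z) = -(b 0 * (b 3 * z)) := fun z => swap' _ _ z
  have g30' : b 3 * b 0 = -(b 0 * b 3) := swap _ _
  have g31 : ∀ z, b 3 * (b 1 * z) = -(b 1 * (b 3 * z)) := fun z => swap' _ _ z
  have g31' : b 3 * b 1 = -(b 1 * b 3) := swap _ _
  have g32 : ∀ z, b 3 * (b 2 * z) = -(b 2 * (b 3 * z)) := fun z => swap' _ _ z
  have g32' : b 3 * b 2 = -(b 2 * b 3) := swap _ _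
  have hsq : ∀ i, a i * a i = 0 := fun i => ι_sq_zero _
  have hsq' : ∀ i z, a i * (a i * z) = 0 := by
    intro i z; rw [← mul_assoc, hsq, zero_mul]
  simp only [lamP, lamHat, ωA, Pc, Fin.sum_univ_four, map_add, map_smul, map_mul, map_neg,
    hq1, hq2]
  simp only [mul_add, add_mul, mul_assoc, smul_mul_assoc, mul_smul_comm, neg_mul, mul_neg,
    hba, hba', h10, h20, h21, h30, h31, h32, h10', h20', h21', h30', h31', h32',
    g10, g20, g21, g30, g31, g32, g10', g20', g21', g30', g31', g32',
    hsq, hsq', neg_neg, smul_neg, mul_zero, zero_mul, smul_zero, neg_zero, add_zero, zero_add]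
  module

/-- `p₂!( p₁*(λ) ∧ (P∧P)/2 ) = λ̂`, i.e. the Fourier–Mukai transform of
`λ = d·f₁*∧f₂* + e·f₃*∧f₄*` is `λ̂ = −(d·f₃∧f₄ + e·f₁∧f₂)`. -/
theorem stmt6 (d e : ℝ)
    -- `p₂! : Λ•(V* ⊕ V) → Λ•V`, integration over `A`:
    (push : ExteriorAlgebra ℝ (V4 × V4) →ₗ[ℝ] ExteriorAlgebra ℝ V4)
    (hpushω : ∀ μ : ExteriorAlgebra ℝ V4, push (q₁ ωA * q₂ μ) = μ)
    (hpushlow : ∀ k : ℕ, k < 4 → ∀ γ ∈ ⋀[ℝ]^k V4,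
      ∀ μ : ExteriorAlgebra ℝ V4, push (q₁ γ * q₂ μ) = 0) :
    push (q₁ (lamP d e) * (((1 : ℝ)/2) • (Pc * Pc))) = lamHat d e := by
  rw [mul_smul_comm, map_smul, key_identity d e, hpushω, smul_smul]
  norm_num
end
end

section
/- For every λ' ∈ Λ²V*: p₂!( f*(ω) ∧ p₁*(λ') ) = ((∫_A λ²)/2)·λ̂' − (∫_A λλ')·λ̂ in Λ²V. (This is equation (a) in the proof of Proposition 'split1' in Section 5: p_{2!}(f*ω · p₁*λ') = (λ²/2)·λ̂' − (λ·λ')·λ̂.) -/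
/-!
Model: `V4 = Fin 4 → ℝ` plays the role of both `V*` (with basis `f 0, …, f 3` the `fⱼ*`)
and `V = H¹(Â)` (with basis `f 0, …, f 3` the `fⱼ`); so `Λ•V* = Λ•V = ExteriorAlgebra ℝ V4`.
The cohomology of `A×Â` is `Λ•(V* ⊕ V) = ExteriorAlgebra ℝ (V4 × V4)`, with `q₁` (resp. `q₂`)
the algebra map induced by the inclusion of the first (resp. second) summand, i.e. `p₁*`
(resp. `p₂*`).  `Pc` is the first Chern class of the Poincaré bundle,
`lamP d e = d·f₁*∧f₂* + e·f₃*∧f₄*` the polarization and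
`lamHat d e = −(d·f₃∧f₄ + e·f₁∧f₂)` its Fourier–Mukai transform.
The pushforward `p₂!` (integration over `A`) and the integration functional `∫_A` are
taken to be any linear maps satisfying their defining properties.
-/

noncomputable section

open ExteriorAlgebra

-- generators
def aE (i : Fin 4) : ExteriorAlgebra ℝ (V4 × V4) := ι ℝ (f i, 0)
def bE (i : Fin 4) : ExteriorAlgebra ℝ (V4 × V4) := ι ℝ (0, f i)
def cE (i : Fin 4) : ExteriorAlgebra ℝ V4 := ι ℝ (f i)

lemma gen_swap {R M : Type*} [CommRing R] [AddCommGroup M] [Module R M] (x y : M) :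
    ι R y * ι R x = -(ι R x * ι R y) := by
  rw [eq_neg_iff_add_eq_zero, add_comm]; exact ι_add_mul_swap x y

lemma q1_ι (v : V4) : q₁ (ι ℝ v) = ι ℝ ((v, 0) : V4 × V4) := by
  simp [q₁, ExteriorAlgebra.map_apply_ι]

lemma q2_ι (v : V4) : q₂ (ι ℝ v) = ι ℝ ((0, v) : V4 × V4) := by
  simp [q₂, ExteriorAlgebra.map_apply_ι]

lemma contrHat_f (d e : ℝ) :
    contrHat d e (f 0) = (-e) • f 1 ∧ contrHat d e (f 1) = e • f 0 ∧
    contrHat d e (f 2) = (-d) • f 3 ∧ contrHat d e (f 3) = d • f 2 := by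
  refine ⟨?_, ?_, ?_, ?_⟩ <;> (funext i; fin_cases i) <;>
    simp [contrHat, Matrix.toLin'_apply, Matrix.mulVec, f, Pi.single, Function.update,
      Fin.sum_univ_four, dotProduct]

lemma fPull_ω (d e : ℝ) : fPull d e ωA =
    (aE 0 + (-e) • bE 1) * ((aE 1 + e • bE 0) * ((aE 2 + (-d) • bE 3) * (aE 3 + d • bE 2))) := by
  obtain ⟨h0, h1, h2, h3⟩ := contrHat_f d e
  have key : ∀ (i : Fin 4) (c : ℝ) (j : Fin 4), contrHat d e (f i) = c • f j →
      fPull d e (ι ℝ (f i)) = aE i + c • bE j := by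
    intro i c j h
    rw [fPull, ExteriorAlgebra.map_apply_ι]
    have : (LinearMap.inl ℝ V4 V4 + (LinearMap.inr ℝ V4 V4).comp (contrHat d e)) (f i)
        = (f i, (0:V4)) + c • ((0:V4), f j) := by
      simp [h]
    rw [this, map_add, map_smul, aE, bE]
  rw [ωA, map_mul, map_mul, map_mul, key 0 (-e) 1 h0, key 1 e 0 h1, key 2 (-d) 3 h2,
    key 3 d 2 h3, mul_assoc, mul_assoc]

section norm
variable (x : ExteriorAlgebra ℝ (V4 × V4)) (y : ExteriorAlgebra ℝ V4)

@[simp] lemma aa_sq (i : Fin 4) : aE i * aE i = 0 := ι_sq_zero _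
@[simp] lemma aa_sq' (i : Fin 4) : aE i * (aE i * x) = 0 := by
  rw [← mul_assoc, aa_sq, zero_mul]
@[simp] lemma bb_sq (i : Fin 4) : bE i * bE i = 0 := ι_sq_zero _
@[simp] lemma bb_sq' (i : Fin 4) : bE i * (bE i * x) = 0 := by
  rw [← mul_assoc, bb_sq, zero_mul]
@[simp] lemma cc_sq (i : Fin 4) : cE i * cE i = 0 := ι_sq_zero _
@[simp] lemma cc_sq' (i : Fin 4) : cE i * (cE i * y) = 0 := by
  rw [← mul_assoc, cc_sq, zero_mul]
@[simp] lemma ba (i j : Fin 4) : bE i * aE j = -(aE j * bE i) := gen_swap _ _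
@[simp] lemma ba' (i j : Fin 4) : bE i * (aE j * x) = -(aE j * (bE i * x)) := by
  rw [← mul_assoc, ba, neg_mul, mul_assoc]
@[simp] lemma aa_s10 : aE 1 * aE 0 = -(aE 0 * aE 1) := gen_swap _ _
@[simp] lemma aa_s10' : aE 1 * (aE 0 * x) = -(aE 0 * (aE 1 * x)) := by
  rw [← mul_assoc, aa_s10, neg_mul, mul_assoc]
@[simp] lemma aa_s20 : aE 2 * aE 0 = -(aE 0 * aE 2) := gen_swap _ _
@[simp] lemma aa_s20' : aE 2 * (aE 0 * x) = -(aE 0 * (aE 2 * x)) := by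
  rw [← mul_assoc, aa_s20, neg_mul, mul_assoc]
@[simp] lemma aa_s21 : aE 2 * aE 1 = -(aE 1 * aE 2) := gen_swap _ _
@[simp] lemma aa_s21' : aE 2 * (aE 1 * x) = -(aE 1 * (aE 2 * x)) := by
  rw [← mul_assoc, aa_s21, neg_mul, mul_assoc]
@[simp] lemma aa_s30 : aE 3 * aE 0 = -(aE 0 * aE 3) := gen_swap _ _
@[simp] lemma aa_s30' : aE 3 * (aE 0 * x) = -(aE 0 * (aE 3 * x)) := by
  rw [← mul_assoc, aa_s30, neg_mul, mul_assoc]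
@[simp] lemma aa_s31 : aE 3 * aE 1 = -(aE 1 * aE 3) := gen_swap _ _
@[simp] lemma aa_s31' : aE 3 * (aE 1 * x) = -(aE 1 * (aE 3 * x)) := by
  rw [← mul_assoc, aa_s31, neg_mul, mul_assoc]
@[simp] lemma aa_s32 : aE 3 * aE 2 = -(aE 2 * aE 3) := gen_swap _ _
@[simp] lemma aa_s32' : aE 3 * (aE 2 * x) = -(aE 2 * (aE 3 * x)) := by
  rw [← mul_assoc, aa_s32, neg_mul, mul_assoc]
@[simp] lemma bb_s10 : bE 1 * bE 0 = -(bE 0 * bE 1) := gen_swap _ _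
@[simp] lemma bb_s10' : bE 1 * (bE 0 * x) = -(bE 0 * (bE 1 * x)) := by
  rw [← mul_assoc, bb_s10, neg_mul, mul_assoc]
@[simp] lemma bb_s20 : bE 2 * bE 0 = -(bE 0 * bE 2) := gen_swap _ _
@[simp] lemma bb_s20' : bE 2 * (bE 0 * x) = -(bE 0 * (bE 2 * x)) := by
  rw [← mul_assoc, bb_s20, neg_mul, mul_assoc]
@[simp] lemma bb_s21 : bE 2 * bE 1 = -(bE 1 * bE 2) := gen_swap _ _
@[simp] lemma bb_s21' : bE 2 * (bE 1 * x) = -(bE 1 * (bE 2 * x)) := by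
  rw [← mul_assoc, bb_s21, neg_mul, mul_assoc]
@[simp] lemma bb_s30 : bE 3 * bE 0 = -(bE 0 * bE 3) := gen_swap _ _
@[simp] lemma bb_s30' : bE 3 * (bE 0 * x) = -(bE 0 * (bE 3 * x)) := by
  rw [← mul_assoc, bb_s30, neg_mul, mul_assoc]
@[simp] lemma bb_s31 : bE 3 * bE 1 = -(bE 1 * bE 3) := gen_swap _ _
@[simp] lemma bb_s31' : bE 3 * (bE 1 * x) = -(bE 1 * (bE 3 * x)) := by
  rw [← mul_assoc, bb_s31, neg_mul, mul_assoc]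
@[simp] lemma bb_s32 : bE 3 * bE 2 = -(bE 2 * bE 3) := gen_swap _ _
@[simp] lemma bb_s32' : bE 3 * (bE 2 * x) = -(bE 2 * (bE 3 * x)) := by
  rw [← mul_assoc, bb_s32, neg_mul, mul_assoc]
@[simp] lemma cc_s10 : cE 1 * cE 0 = -(cE 0 * cE 1) := gen_swap _ _
@[simp] lemma cc_s10' : cE 1 * (cE 0 * y) = -(cE 0 * (cE 1 * y)) := by
  rw [← mul_assoc, cc_s10, neg_mul, mul_assoc]
@[simp] lemma cc_s20 : cE 2 * cE 0 = -(cE 0 * cE 2) := gen_swap _ _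
@[simp] lemma cc_s20' : cE 2 * (cE 0 * y) = -(cE 0 * (cE 2 * y)) := by
  rw [← mul_assoc, cc_s20, neg_mul, mul_assoc]
@[simp] lemma cc_s21 : cE 2 * cE 1 = -(cE 1 * cE 2) := gen_swap _ _
@[simp] lemma cc_s21' : cE 2 * (cE 1 * y) = -(cE 1 * (cE 2 * y)) := by
  rw [← mul_assoc, cc_s21, neg_mul, mul_assoc]
@[simp] lemma cc_s30 : cE 3 * cE 0 = -(cE 0 * cE 3) := gen_swap _ _
@[simp] lemma cc_s30' : cE 3 * (cE 0 * y) = -(cE 0 * (cE 3 * y)) := by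
  rw [← mul_assoc, cc_s30, neg_mul, mul_assoc]
@[simp] lemma cc_s31 : cE 3 * cE 1 = -(cE 1 * cE 3) := gen_swap _ _
@[simp] lemma cc_s31' : cE 3 * (cE 1 * y) = -(cE 1 * (cE 3 * y)) := by
  rw [← mul_assoc, cc_s31, neg_mul, mul_assoc]
@[simp] lemma cc_s32 : cE 3 * cE 2 = -(cE 2 * cE 3) := gen_swap _ _
@[simp] lemma cc_s32' : cE 3 * (cE 2 * y) = -(cE 2 * (cE 3 * y)) := by
  rw [← mul_assoc, cc_s32, neg_mul, mul_assoc]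

end norm


lemma lamP_eq (d e : ℝ) : lamP d e = d • (cE 0 * cE 1) + e • (cE 2 * cE 3) := rfl
lemma lamHat_eq (d e : ℝ) : lamHat d e = -(d • (cE 2 * cE 3) + e • (cE 0 * cE 1)) := rfl
lemma q1_c (i : Fin 4) : q₁ (cE i) = aE i := by rw [cE, q1_ι]; rfl
lemma q2_c (i : Fin 4) : q₂ (cE i) = bE i := by rw [cE, q2_ι]; rfl
lemma q1_cc (i j : Fin 4) : q₁ (cE i * cE j) = aE i * aE j := by
  rw [map_mul, q1_c, q1_c]
lemma Pc_eq : Pc = aE 0 * bE 0 + aE 1 * bE 1 + aE 2 * bE 2 + aE 3 * bE 3 := by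
  rw [Pc, Fin.sum_univ_four]
  simp only [q1_ι, q2_ι]; rfl

lemma mem_pow2 (i j : Fin 4) : cE i * cE j ∈ ⋀[ℝ]^2 V4 := by
  show _ ∈ (LinearMap.range (ι ℝ : V4 →ₗ[ℝ] ExteriorAlgebra ℝ V4)) ^ 2
  rw [pow_two]
  exact Submodule.mul_mem_mul (LinearMap.mem_range_self _ _) (LinearMap.mem_range_self _ _)

lemma mem_pow3 (i j k : Fin 4) : cE i * cE j * cE k ∈ ⋀[ℝ]^3 V4 := by
  show _ ∈ (LinearMap.range (ι ℝ : V4 →ₗ[ℝ] ExteriorAlgebra ℝ V4)) ^ 3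
  rw [pow_succ, pow_two]
  exact Submodule.mul_mem_mul
    (Submodule.mul_mem_mul (LinearMap.mem_range_self _ _) (LinearMap.mem_range_self _ _))
    (LinearMap.mem_range_self _ _)


lemma hp4 (push : ExteriorAlgebra ℝ (V4 × V4) →ₗ[ℝ] ExteriorAlgebra ℝ V4)
    (hpushω : ∀ μ : ExteriorAlgebra ℝ V4, push (q₁ ωA * q₂ μ) = μ) (p q : Fin 4) :
    push (aE 0 * (aE 1 * (aE 2 * (aE 3 * (bE p * bE q))))) = cE p * cE q := by
  have e1 : q₁ ωA = aE 0 * aE 1 * aE 2 * aE 3 := by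
    rw [ωA, map_mul, map_mul, map_mul, show (ι ℝ (f 0) : ExteriorAlgebra ℝ V4) = cE 0 from rfl,
      show (ι ℝ (f 1) : ExteriorAlgebra ℝ V4) = cE 1 from rfl,
      show (ι ℝ (f 2) : ExteriorAlgebra ℝ V4) = cE 2 from rfl,
      show (ι ℝ (f 3) : ExteriorAlgebra ℝ V4) = cE 3 from rfl, q1_c, q1_c, q1_c, q1_c]
  have h : aE 0 * (aE 1 * (aE 2 * (aE 3 * (bE p * bE q)))) = q₁ ωA * q₂ (cE p * cE q) := by
    rw [e1, map_mul, q2_c, q2_c]; noncomm_ring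
  rw [h, hpushω]

lemma hp3 (push : ExteriorAlgebra ℝ (V4 × V4) →ₗ[ℝ] ExteriorAlgebra ℝ V4)
    (hpushlow : ∀ k : ℕ, k < 4 → ∀ γ ∈ ⋀[ℝ]^k V4,
      ∀ μ : ExteriorAlgebra ℝ V4, push (q₁ γ * q₂ μ) = 0) (i j k p q r : Fin 4) :
    push (aE i * (aE j * (aE k * (bE p * (bE q * bE r))))) = 0 := by
  have h : aE i * (aE j * (aE k * (bE p * (bE q * bE r)))) =
      q₁ (cE i * cE j * cE k) * q₂ (cE p * (cE q * cE r)) := by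
    rw [map_mul, map_mul, map_mul, map_mul, q1_c, q1_c, q1_c, q2_c, q2_c, q2_c]
    noncomm_ring
  rw [h, hpushlow 3 (by norm_num) (cE i * cE j * cE k) (mem_pow3 i j k)
    (cE p * (cE q * cE r))]

lemma hp2 (push : ExteriorAlgebra ℝ (V4 × V4) →ₗ[ℝ] ExteriorAlgebra ℝ V4)
    (hpushlow : ∀ k : ℕ, k < 4 → ∀ γ ∈ ⋀[ℝ]^k V4,
      ∀ μ : ExteriorAlgebra ℝ V4, push (q₁ γ * q₂ μ) = 0) (i j p q r s : Fin 4) :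
    push (aE i * (aE j * (bE p * (bE q * (bE r * bE s))))) = 0 := by
  have h : aE i * (aE j * (bE p * (bE q * (bE r * bE s)))) =
      q₁ (cE i * cE j) * q₂ (cE p * (cE q * (cE r * cE s))) := by
    rw [map_mul, map_mul, map_mul, map_mul, q1_c, q1_c, q2_c, q2_c, q2_c, q2_c]
    noncomm_ring
  rw [h, hpushlow 2 (by norm_num) (cE i * cE j) (mem_pow2 i j)
    (cE p * (cE q * (cE r * cE s)))]


lemma fmk0 (h : 0 < 4) : (⟨0, h⟩ : Fin 4) = 0 := rfl
lemma fmk1 (h : 1 < 4) : (⟨1, h⟩ : Fin 4) = 1 := rfl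
lemma fmk2 (h : 2 < 4) : (⟨2, h⟩ : Fin 4) = 2 := rfl
lemma fmk3 (h : 3 < 4) : (⟨3, h⟩ : Fin 4) = 3 := rfl

set_option maxHeartbeats 2000000 in
lemma core (d e : ℝ)
    (integ : ExteriorAlgebra ℝ V4 →ₗ[ℝ] ℝ)
    (hintegω : integ (cE 0 * (cE 1 * (cE 2 * cE 3))) = 1)
    (push : ExteriorAlgebra ℝ (V4 × V4) →ₗ[ℝ] ExteriorAlgebra ℝ V4)
    (hpushω : ∀ μ : ExteriorAlgebra ℝ V4, push (q₁ ωA * q₂ μ) = μ)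
    (hpushlow : ∀ k : ℕ, k < 4 → ∀ γ ∈ ⋀[ℝ]^k V4,
      ∀ μ : ExteriorAlgebra ℝ V4, push (q₁ γ * q₂ μ) = 0) (i j : Fin 4) :
    push (fPull d e ωA * q₁ (cE i * cE j)) =
      (integ (lamP d e * lamP d e) / 2) •
          push (q₁ (cE i * cE j) * (((1 : ℝ)/2) • (Pc * Pc))) -
        (integ (lamP d e * (cE i * cE j))) • lamHat d e := by
  have H4 := hp4 push hpushω
  have H3 := hp3 push hpushlow
  have H2 := hp2 push hpushlow
  fin_cases i <;> fin_cases j <;>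
  · simp only [fmk0, fmk1, fmk2, fmk3]
    rw [fPull_ω, q1_cc, Pc_eq, lamP_eq, lamHat_eq]
    simp only [mul_add, add_mul, mul_assoc, smul_mul_assoc, mul_smul_comm, neg_mul, mul_neg,
      neg_neg, aa_sq, aa_sq', bb_sq, bb_sq', ba, ba', cc_sq, cc_sq',
      aa_s10, aa_s10', aa_s20, aa_s20', aa_s21, aa_s21', aa_s30, aa_s30', aa_s31, aa_s31',
      aa_s32, aa_s32', bb_s10, bb_s10', bb_s20, bb_s20', bb_s21, bb_s21', bb_s30, bb_s30',
      bb_s31, bb_s31', bb_s32, bb_s32', cc_s10, cc_s10', cc_s20, cc_s20', cc_s21, cc_s21',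
      cc_s30, cc_s30', cc_s31, cc_s31', cc_s32, cc_s32',
      smul_smul, mul_zero, zero_mul, smul_zero, neg_zero, add_zero, zero_add, smul_neg,
      smul_add, neg_smul]
    simp only [map_add, map_smul, map_neg, map_zero, H4, H3, H2, hintegω, smul_eq_mul,
      mul_one, smul_zero, add_zero, zero_add]
    module

lemma vec_decomp (u : V4) : u = ∑ i, u i • f i := by
  funext j
  simp [f, Pi.single_apply, Finset.sum_apply]



set_option maxHeartbeats 1000000

/-- `p₂!( f*(ω) ∧ p₁*(λ') ) = ((∫_A λ²)/2)·λ̂' − (∫_A λλ')·λ̂` for every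
2-form `λ' ∈ Λ²V*`, where `λ̂' = p₂!(p₁*(λ') ∧ (P∧P)/2)` is its Fourier–Mukai transform. -/
theorem stmt7 (d e : ℝ)
    -- `∫_A : Λ•V* → ℝ`, the coordinate with respect to `ω`:
    (integ : ExteriorAlgebra ℝ V4 →ₗ[ℝ] ℝ)
    (hintegω : integ ωA = 1)
    (hinteglow : ∀ k : ℕ, k < 4 → ∀ γ ∈ ⋀[ℝ]^k V4, integ γ = 0)
    -- `p₂! : Λ•(V* ⊕ V) → Λ•V`, integration over `A`:
    (push : ExteriorAlgebra ℝ (V4 × V4) →ₗ[ℝ] ExteriorAlgebra ℝ V4)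
    (hpushω : ∀ μ : ExteriorAlgebra ℝ V4, push (q₁ ωA * q₂ μ) = μ)
    (hpushlow : ∀ k : ℕ, k < 4 → ∀ γ ∈ ⋀[ℝ]^k V4,
      ∀ μ : ExteriorAlgebra ℝ V4, push (q₁ γ * q₂ μ) = 0)
    -- the 2-form `λ' ∈ Λ²V*` and its Fourier–Mukai transform `λ̂'`:
    (lam' : ExteriorAlgebra ℝ V4) (hlam' : lam' ∈ ⋀[ℝ]^2 V4)
    (lamHat' : ExteriorAlgebra ℝ V4)
    (hlamHat' : lamHat' = push (q₁ lam' * (((1 : ℝ)/2) • (Pc * Pc)))) :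
    push (fPull d e ωA * q₁ lam') =
      (integ (lamP d e * lamP d e) / 2) • lamHat' -
        (integ (lamP d e * lam')) • lamHat d e := by
  subst hlamHat'
  have hintegω' : integ (cE 0 * (cE 1 * (cE 2 * cE 3))) = 1 := by
    rw [show cE 0 * (cE 1 * (cE 2 * cE 3)) = ωA by rw [ωA]; noncomm_ring]
    exact hintegω
  set S : Submodule ℝ (ExteriorAlgebra ℝ V4) :=
    { carrier := {x | push (fPull d e ωA * q₁ x) =
        (integ (lamP d e * lamP d e) / 2) •
          push (q₁ x * (((1 : ℝ)/2) • (Pc * Pc))) -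
        (integ (lamP d e * x)) • lamHat d e}
      zero_mem' := by
        simp
      add_mem' := by
        intro x y hx hy
        simp only [Set.mem_setOf_eq, map_add, mul_add, add_mul] at *
        rw [hx, hy]
        module
      smul_mem' := by
        intro c x hx
        simp only [Set.mem_setOf_eq, map_smul, mul_smul_comm, smul_mul_assoc,
          smul_eq_mul] at *
        rw [hx]
        simp only [smul_sub, smul_smul, smul_eq_mul]
        module } with hS
  have key : lam' ∈ S := by
    have h2 : lam' ∈ (LinearMap.range (ι ℝ : V4 →ₗ[ℝ] ExteriorAlgebra ℝ V4)) *
        (LinearMap.range (ι ℝ : V4 →ₗ[ℝ] ExteriorAlgebra ℝ V4)) := by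
      rw [← pow_two]; exact hlam'
    refine Submodule.mul_induction_on h2 ?_ (fun x y hx hy => S.add_mem hx hy)
    rintro _ ⟨u, rfl⟩ _ ⟨v, rfl⟩
    have hu := vec_decomp u
    have hv := vec_decomp v
    rw [hu, hv, map_sum, map_sum, Finset.sum_mul]
    refine Submodule.sum_mem S fun i _ => ?_
    rw [Finset.mul_sum]
    refine Submodule.sum_mem S fun j _ => ?_
    rw [map_smul, map_smul, smul_mul_assoc, mul_smul_comm, smul_smul]
    exact S.smul_mem _ (core d e integ hintegω' push hpushω hpushlow i j)
  exact key
end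
end

section
/- One has p₂!( f*(λ) ∧ p₁*(ω) ) = −((∫_A λ²)/2)·λ̂ in Λ²V. (This is equation (b) in the proof of Proposition 'split1' in Section 5: p_{2!}(f*λ · p₁*ω) = −(λ²/2)·λ̂, i.e. Φ_{Λ̂}*λ = −(λ²/2)·λ̂.) -/
/-!
Model: `V4 = Fin 4 → ℝ` plays the role of both `V*` (with basis `f 0, …, f 3` the `fⱼ*`)
and `V = H¹(Â)` (with basis `f 0, …, f 3` the `fⱼ`); so `Λ•V* = Λ•V = ExteriorAlgebra ℝ V4`.
The cohomology of `A×Â` is `Λ•(V* ⊕ V) = ExteriorAlgebra ℝ (V4 × V4)`, with `q₁` (resp. `q₂`)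
the algebra map induced by the inclusion of the first (resp. second) summand, i.e. `p₁*`
(resp. `p₂*`).  `Pc` is the first Chern class of the Poincaré bundle,
`lamP d e = d·f₁*∧f₂* + e·f₃*∧f₄*` the polarization and
`lamHat d e = −(d·f₃∧f₄ + e·f₁∧f₂)` its Fourier–Mukai transform.
The pushforward `p₂!` (integration over `A`) and the integration functional `∫_A` are
taken to be any linear maps satisfying their defining properties.
-/

noncomputable section

open ExteriorAlgebra

section Helpers
variable {M : Type*} [AddCommGroup M] [Module ℝ M]

lemma swap' (x y : M) : ι ℝ x * ι ℝ y = -(ι ℝ y * ι ℝ x) :=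
  eq_neg_of_add_eq_zero_left (ι_add_mul_swap x y)

lemma Slem (x y : M) (c : ExteriorAlgebra ℝ M) :
    ι ℝ x * (ι ℝ y * c) = -(ι ℝ y * (ι ℝ x * c)) := by
  rw [← mul_assoc, swap', neg_mul, mul_assoc]

lemma Zlem (x : M) (c : ExteriorAlgebra ℝ M) : ι ℝ x * (ι ℝ x * c) = 0 := by
  rw [← mul_assoc, ι_sq_zero, zero_mul]

lemma Z1 (x y : M) (c : ExteriorAlgebra ℝ M) :
    ι ℝ x * (ι ℝ y * (ι ℝ x * c)) = 0 := by
  rw [Slem, Zlem, mul_zero, neg_zero]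

lemma Z1t (x y : M) : ι ℝ x * (ι ℝ y * ι ℝ x) = 0 := by
  rw [Slem, ι_sq_zero, mul_zero, neg_zero]

lemma Z2 (x y z : M) (c : ExteriorAlgebra ℝ M) :
    ι ℝ x * (ι ℝ y * (ι ℝ z * (ι ℝ x * c))) = 0 := by
  rw [Slem, Z1, mul_zero, neg_zero]

lemma Z2t (x y z : M) : ι ℝ x * (ι ℝ y * (ι ℝ z * ι ℝ x)) = 0 := by
  rw [Slem, Z1t, mul_zero, neg_zero]

lemma Z3 (x y z w : M) (c : ExteriorAlgebra ℝ M) :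
    ι ℝ x * (ι ℝ y * (ι ℝ z * (ι ℝ w * (ι ℝ x * c)))) = 0 := by
  rw [Slem, Z2, mul_zero, neg_zero]

lemma Z3t (x y z w : M) : ι ℝ x * (ι ℝ y * (ι ℝ z * (ι ℝ w * ι ℝ x))) = 0 := by
  rw [Slem, Z2t, mul_zero, neg_zero]

lemma e1 (y x1 x2 : M) : ι ℝ y * (ι ℝ x1 * ι ℝ x2) = ι ℝ x1 * (ι ℝ x2 * ι ℝ y) := by
  rw [Slem, swap' y x2, mul_neg, neg_neg]

lemma move3 (y x1 x2 x3 : M) :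
    ι ℝ y * (ι ℝ x1 * (ι ℝ x2 * ι ℝ x3)) = -(ι ℝ x1 * (ι ℝ x2 * (ι ℝ x3 * ι ℝ y))) := by
  rw [Slem, e1]

lemma move4 (y x1 x2 x3 x4 : M) :
    ι ℝ y * (ι ℝ x1 * (ι ℝ x2 * (ι ℝ x3 * ι ℝ x4))) =
      ι ℝ x1 * (ι ℝ x2 * (ι ℝ x3 * (ι ℝ x4 * ι ℝ y))) := by
  rw [Slem, move3, mul_neg, neg_neg]

lemma move4c (y x1 x2 x3 x4 : M) (c : ExteriorAlgebra ℝ M) :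
    ι ℝ y * (ι ℝ x1 * (ι ℝ x2 * (ι ℝ x3 * (ι ℝ x4 * c)))) =
      ι ℝ x1 * (ι ℝ x2 * (ι ℝ x3 * (ι ℝ x4 * (ι ℝ y * c)))) := by
  rw [Slem, Slem y x2, Slem y x3, Slem y x4]
  simp only [mul_neg, neg_neg]

end Helpers


lemma lamsq (d e : ℝ) : lamP d e * lamP d e = (2 * (d * e)) • ωA := by
  have h23 : ι ℝ (f 2) * (ι ℝ (f 3) * (ι ℝ (f 0) * ι ℝ (f 1))) =
      ι ℝ (f 0) * (ι ℝ (f 1) * (ι ℝ (f 2) * ι ℝ (f 3))) := by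
    rw [move3, move3, neg_neg]
  simp only [lamP, ωA, mul_assoc, add_mul, mul_add, smul_mul_assoc, mul_smul_comm,
    smul_smul, Z1t, Z1, Z2, Z3, Z2t, Z3t, Zlem, mul_zero, smul_zero, zero_add, add_zero, h23]
  module

lemma hc0 (d e : ℝ) : contrHat d e (f 0) = (-e) • f 1 := by
  funext i; fin_cases i <;>
    simp [contrHat, f, Matrix.toLin'_apply, Matrix.mulVec, dotProduct,
      Fin.sum_univ_succ, Pi.single_apply]

lemma hc1 (d e : ℝ) : contrHat d e (f 1) = e • f 0 := by
  funext i; fin_cases i <;>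
    simp [contrHat, f, Matrix.toLin'_apply, Matrix.mulVec, dotProduct,
      Fin.sum_univ_succ, Pi.single_apply]

lemma hc2 (d e : ℝ) : contrHat d e (f 2) = (-d) • f 3 := by
  funext i; fin_cases i <;>
    simp [contrHat, f, Matrix.toLin'_apply, Matrix.mulVec, dotProduct,
      Fin.sum_univ_succ, Pi.single_apply]

lemma hc3 (d e : ℝ) : contrHat d e (f 3) = d • f 2 := by
  funext i; fin_cases i <;>
    simp [contrHat, f, Matrix.toLin'_apply, Matrix.mulVec, dotProduct,
      Fin.sum_univ_succ, Pi.single_apply]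

lemma fPull_ι (d e : ℝ) (j : Fin 4) (s : ℝ) (k : Fin 4)
    (h : contrHat d e (f j) = s • f k) :
    fPull d e (ι ℝ (f j)) = ι ℝ ((f j, 0) : V4 × V4) + s • ι ℝ ((0, f k) : V4 × V4) := by
  rw [fPull, map_apply_ι]
  have h2 : (LinearMap.inl ℝ V4 V4 + (LinearMap.inr ℝ V4 V4).comp (contrHat d e)) (f j)
      = ((f j, 0) : V4 × V4) + s • ((0, f k) : V4 × V4) := by
    simp [h, Prod.ext_iff]
  rw [h2, map_add, map_smul]

lemma q1ω : q₁ ωA = ι ℝ ((f 0, 0) : V4 × V4) * (ι ℝ ((f 1, 0) : V4 × V4) *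
    (ι ℝ ((f 2, 0) : V4 × V4) * ι ℝ ((f 3, 0) : V4 × V4))) := by
  simp [q₁, ωA, map_apply_ι, mul_assoc]

lemma key (d e : ℝ) :
    fPull d e (lamP d e) * q₁ ωA =
      q₁ ωA * q₂ ((d * e ^ 2) • (ι ℝ (f 0) * ι ℝ (f 1)) +
        (d ^ 2 * e) • (ι ℝ (f 2) * ι ℝ (f 3))) := by
  have hF0 := fPull_ι d e 0 (-e) 1 (hc0 d e)
  have hF1 := fPull_ι d e 1 e 0 (hc1 d e)
  have hF2 := fPull_ι d e 2 (-d) 3 (hc2 d e)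
  have hF3 := fPull_ι d e 3 d 2 (hc3 d e)
  have hs1 : ι ℝ ((0, f 1) : V4 × V4) * (ι ℝ ((0, f 0) : V4 × V4) *
      (ι ℝ ((f 0, 0) : V4 × V4) * (ι ℝ ((f 1, 0) : V4 × V4) *
        (ι ℝ ((f 2, 0) : V4 × V4) * ι ℝ ((f 3, 0) : V4 × V4))))) =
      -(ι ℝ ((f 0, 0) : V4 × V4) * (ι ℝ ((f 1, 0) : V4 × V4) *
        (ι ℝ ((f 2, 0) : V4 × V4) * (ι ℝ ((f 3, 0) : V4 × V4) *
          (ι ℝ ((0, f 0) : V4 × V4) * ι ℝ ((0, f 1) : V4 × V4)))))) := by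
    rw [move4, move4c, swap']
    simp only [mul_neg, neg_neg]
  have hs2 : ι ℝ ((0, f 3) : V4 × V4) * (ι ℝ ((0, f 2) : V4 × V4) *
      (ι ℝ ((f 0, 0) : V4 × V4) * (ι ℝ ((f 1, 0) : V4 × V4) *
        (ι ℝ ((f 2, 0) : V4 × V4) * ι ℝ ((f 3, 0) : V4 × V4))))) =
      -(ι ℝ ((f 0, 0) : V4 × V4) * (ι ℝ ((f 1, 0) : V4 × V4) *
        (ι ℝ ((f 2, 0) : V4 × V4) * (ι ℝ ((f 3, 0) : V4 × V4) *
          (ι ℝ ((0, f 2) : V4 × V4) * ι ℝ ((0, f 3) : V4 × V4)))))) := by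
    rw [move4, move4c, swap']
    simp only [mul_neg, neg_neg]
  rw [lamP, map_add, map_smul, map_smul, map_mul, map_mul, hF0, hF1, hF2, hF3, q1ω]
  simp only [q₂, map_add, map_smul, map_mul, map_apply_ι, LinearMap.inr_apply]
  simp only [mul_assoc, add_mul, mul_add, smul_mul_assoc, mul_smul_comm, smul_smul,
    smul_add, Z1, Z2, Z3, Z1t, Z2t, Z3t, Zlem, mul_zero, smul_zero, zero_add, add_zero,
    hs1, hs2]
  module

/-- `p₂!( f*(λ) ∧ p₁*(ω) ) = −((∫_A λ²)/2)·λ̂`. -/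
theorem stmt8 (d e : ℝ)
    -- `∫_A : Λ•V* → ℝ`, the coordinate with respect to `ω`:
    (integ : ExteriorAlgebra ℝ V4 →ₗ[ℝ] ℝ)
    (hintegω : integ ωA = 1)
    (hinteglow : ∀ k : ℕ, k < 4 → ∀ γ ∈ ⋀[ℝ]^k V4, integ γ = 0)
    -- `p₂! : Λ•(V* ⊕ V) → Λ•V`, integration over `A`:
    (push : ExteriorAlgebra ℝ (V4 × V4) →ₗ[ℝ] ExteriorAlgebra ℝ V4)
    (hpushω : ∀ μ : ExteriorAlgebra ℝ V4, push (q₁ ωA * q₂ μ) = μ)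
    (hpushlow : ∀ k : ℕ, k < 4 → ∀ γ ∈ ⋀[ℝ]^k V4,
      ∀ μ : ExteriorAlgebra ℝ V4, push (q₁ γ * q₂ μ) = 0) :
    push (fPull d e (lamP d e) * q₁ ωA) =
      (-(integ (lamP d e * lamP d e) / 2)) • lamHat d e := by
  rw [key d e, hpushω, lamsq, map_smul, hintegω, lamHat]
  simp only [smul_eq_mul, mul_one, smul_neg, neg_neg, smul_add, smul_smul]
  module
end
end
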